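/- arXiv:1601.08224 — 8 statements merged into one kernel-verified Lean document; each statement's English description precedes it below -/
import Mathlib

section
/- Let G and H be simple graphs on finite vertex sets with the same multiset of vertex degrees (i.e., G and H are realizations of the same degree sequence). If G is a split graph, then H is also a split graph. -/
/-- A simple graph is a *split graph* if its vertex set can be partitioned into a
set `U` inducing a clique and its complement inducing an independent set. -/
def SimpleGraph.IsSplitGraph {V : Type*} (G : SimpleGraph V) : Prop :=
  ∃ U : Set V,
    (∀ u ∈ U, ∀ v ∈ U, u ≠ v → G.Adj u v) ∧
    (∀ u ∉ U, ∀ v ∉ U, ¬ G.Adj u v)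

section AuxSplit
open Finset

variable {β : Type*} [Fintype β] [DecidableEq β] (H : SimpleGraph β) [DecidableRel H.Adj]


private lemma aux_cross (S : Finset β) :
    ∑ v ∈ S, #(Sᶜ.filter (H.Adj v)) = ∑ w ∈ Sᶜ, #(S.filter (H.Adj w)) := by
  simp only [Finset.card_filter]
  rw [Finset.sum_comm]
  refine Finset.sum_congr rfl fun w _ => Finset.sum_congr rfl fun v _ => ?_
  simp only [H.adj_comm v w]

private lemma aux_deg (S : Finset β) (v : β) :
    H.degree v = #(S.filter (H.Adj v)) + #(Sᶜ.filter (H.Adj v)) := by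
  rw [← SimpleGraph.card_neighborFinset_eq_degree, SimpleGraph.neighborFinset_eq_filter,
    ← Finset.card_union_of_disjoint (Finset.disjoint_filter_filter disjoint_compl_right),
    ← Finset.filter_union, Finset.union_compl]

private lemma aux_split_of_eq (S : Finset β)
    (heq : ∑ v ∈ S, H.degree v = #S * (#S - 1) + ∑ w ∈ Sᶜ, H.degree w) :
    H.IsSplitGraph := by
  have hsub : ∀ v ∈ S, S.filter (H.Adj v) ⊆ S.erase v := by
    intro v hv w hw
    rw [Finset.mem_filter] at hw
    exact Finset.mem_erase.2 ⟨fun h => H.irrefl (h ▸ hw.2), hw.1⟩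
  have hbd : ∀ v ∈ S, #(S.filter (H.Adj v)) ≤ #S - 1 := by
    intro v hv
    simpa [Finset.card_erase_of_mem hv] using Finset.card_le_card (hsub v hv)
  have h1 : ∑ v ∈ S, H.degree v
      = ∑ v ∈ S, #(S.filter (H.Adj v)) + ∑ v ∈ S, #(Sᶜ.filter (H.Adj v)) := by
    rw [← Finset.sum_add_distrib]; exact Finset.sum_congr rfl fun v _ => aux_deg H S v
  have h2 : ∑ w ∈ Sᶜ, H.degree w
      = ∑ w ∈ Sᶜ, #(S.filter (H.Adj w)) + ∑ w ∈ Sᶜ, #(Sᶜ.filter (H.Adj w)) := by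
    rw [← Finset.sum_add_distrib]; exact Finset.sum_congr rfl fun v _ => aux_deg H S v
  rw [h1, h2, aux_cross] at heq
  have hA : ∑ v ∈ S, #(S.filter (H.Adj v))
      = #S * (#S - 1) + ∑ w ∈ Sᶜ, #(Sᶜ.filter (H.Adj w)) := by omega
  have hAle : ∑ v ∈ S, #(S.filter (H.Adj v)) ≤ #S * (#S - 1) := by
    calc ∑ v ∈ S, #(S.filter (H.Adj v)) ≤ ∑ v ∈ S, (#S - 1) :=
          Finset.sum_le_sum hbd
      _ = #S * (#S - 1) := by rw [Finset.sum_const, smul_eq_mul]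
  have hZ : ∑ w ∈ Sᶜ, #(Sᶜ.filter (H.Adj w)) = 0 := by omega
  have hAeq : ∑ v ∈ S, #(S.filter (H.Adj v)) = ∑ v ∈ S, (#S - 1) := by
    rw [Finset.sum_const, smul_eq_mul]; omega
  have hterm : ∀ v ∈ S, #(S.filter (H.Adj v)) = #S - 1 := by
    by_contra hc
    push_neg at hc
    obtain ⟨v0, hv0, hne⟩ := hc
    have : ∑ v ∈ S, #(S.filter (H.Adj v)) < ∑ v ∈ S, (#S - 1) :=
      Finset.sum_lt_sum hbd ⟨v0, hv0, lt_of_le_of_ne (hbd v0 hv0) hne⟩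
    omega
  refine ⟨↑S, ?_, ?_⟩
  · intro u hu v hv huv
    have hu' : u ∈ S := hu
    have hv' : v ∈ S := hv
    have : S.filter (H.Adj u) = S.erase u := by
      refine Finset.eq_of_subset_of_card_le (hsub u hu') ?_
      rw [Finset.card_erase_of_mem hu', hterm u hu']
    have hv2 : v ∈ S.filter (H.Adj u) := by
      rw [this]; exact Finset.mem_erase.2 ⟨Ne.symm huv, hv'⟩
    exact (Finset.mem_filter.1 hv2).2
  · intro u hu v hv hadj
    have hu' : u ∈ Sᶜ := Finset.mem_compl.2 hu
    have hv' : v ∈ Sᶜ := Finset.mem_compl.2 hv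
    have h0 := (Finset.sum_eq_zero_iff).1 hZ u hu'
    rw [Finset.card_eq_zero] at h0
    have : v ∈ Sᶜ.filter (H.Adj u) := Finset.mem_filter.2 ⟨hv', hadj⟩
    rw [h0] at this
    exact absurd this (Finset.notMem_empty v)

private lemma aux_Q_of_split (hG : H.IsSplitGraph) :
    ∃ k : ℕ, #(univ.filter (fun v => k ≤ H.degree v)) ≤ k
    ∧ k ≤ #(univ.filter (fun v => k ≤ H.degree v + 1))
    ∧ (∑ v ∈ univ.filter (fun v => k ≤ H.degree v), H.degree v)
        + (k - #(univ.filter (fun v => k ≤ H.degree v))) * (k-1)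
      = k*(k-1) + (∑ v ∈ univ.filter (fun v => H.degree v + 2 ≤ k), H.degree v)
        + (#(univ.filter (fun v => k ≤ H.degree v + 1)) - k) * (k-1) := by
  classical
  obtain ⟨U₀, hc₀, hi₀⟩ := hG
  -- the family of valid clique-sides, as finsets
  set P : Finset β → Prop := fun s =>
    (∀ u ∈ s, ∀ v ∈ s, u ≠ v → H.Adj u v) ∧ (∀ u ∉ s, ∀ v ∉ s, ¬ H.Adj u v) with hP
  have hP₀ : P U₀.toFinset := by
    constructor
    · intro u hu v hv huv
      exact hc₀ u (Set.mem_toFinset.1 hu) v (Set.mem_toFinset.1 hv) huv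
    · intro u hu v hv
      exact hi₀ u (fun h => hu (Set.mem_toFinset.2 h)) v (fun h => hv (Set.mem_toFinset.2 h))
  obtain ⟨U, hUmem, hUmax⟩ := Finset.exists_max_image (univ.filter P) Finset.card
    ⟨U₀.toFinset, Finset.mem_filter.2 ⟨Finset.mem_univ _, hP₀⟩⟩
  have hU : P U := (Finset.mem_filter.1 hUmem).2
  set k := #U with hk
  -- maximality: every vertex outside U misses some vertex of U
  have hmaxU : ∀ w ∉ U, ∃ u ∈ U, ¬ H.Adj w u := by
    intro w hw
    by_contra hcon
    push_neg at hcon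
    have hPin : P (insert w U) := by
      constructor
      · intro u hu v hv huv
        rcases Finset.mem_insert.1 hu with rfl | hu'
        · rcases Finset.mem_insert.1 hv with rfl | hv'
          · exact absurd rfl huv
          · exact hcon v hv'
        · rcases Finset.mem_insert.1 hv with rfl | hv'
          · exact (hcon u hu').symm
          · exact hU.1 u hu' v hv' huv
      · intro u hu v hv
        exact hU.2 u (fun h => hu (Finset.mem_insert_of_mem h))
          v (fun h => hv (Finset.mem_insert_of_mem h))
    have := hUmax (insert w U) (Finset.mem_filter.2 ⟨Finset.mem_univ _, hPin⟩)
    rw [Finset.card_insert_of_notMem hw] at this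
    omega
  -- degree bounds
  have hWdeg : ∀ w ∉ U, H.degree w + 1 ≤ k := by
    intro w hw
    obtain ⟨u, hu, hnadj⟩ := hmaxU w hw
    have hsub : H.neighborFinset w ⊆ U.erase u := by
      intro x hx
      rw [SimpleGraph.mem_neighborFinset] at hx
      have hxU : x ∈ U := by
        by_contra hxU
        exact hU.2 w hw x hxU hx
      refine Finset.mem_erase.2 ⟨?_, hxU⟩
      rintro rfl
      exact hnadj hx
    have h1 := Finset.card_le_card hsub
    rw [Finset.card_erase_of_mem hu, SimpleGraph.card_neighborFinset_eq_degree] at h1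
    have : 1 ≤ k := Finset.card_pos.2 ⟨u, hu⟩
    omega
  have hUdeg : ∀ u ∈ U, k ≤ H.degree u + 1 := by
    intro u hu
    have hsub : U.erase u ⊆ H.neighborFinset u := by
      intro x hx
      rw [SimpleGraph.mem_neighborFinset]
      exact hU.1 u hu x (Finset.mem_erase.1 hx).2 (Ne.symm (Finset.mem_erase.1 hx).1)
    have h1 := Finset.card_le_card hsub
    rw [Finset.card_erase_of_mem hu, SimpleGraph.card_neighborFinset_eq_degree] at h1
    omega
  -- the fundamental sum identity for a split partition
  have hUsum : ∑ u ∈ U, H.degree u = k * (k - 1) + ∑ w ∈ Uᶜ, H.degree w := by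
    have hclq : ∀ u ∈ U, U.filter (H.Adj u) = U.erase u := by
      intro u hu
      ext x
      simp only [Finset.mem_filter, Finset.mem_erase]
      constructor
      · rintro ⟨hxU, hadj⟩
        exact ⟨fun h => H.irrefl (h ▸ hadj), hxU⟩
      · rintro ⟨hne, hxU⟩
        exact ⟨hxU, hU.1 u hu x hxU (Ne.symm hne)⟩
    have hInd : ∀ w ∈ Uᶜ, Uᶜ.filter (H.Adj w) = ∅ := by
      intro w hw
      rw [Finset.filter_eq_empty_iff]
      intro x hx
      exact hU.2 w (Finset.mem_compl.1 hw) x (Finset.mem_compl.1 hx)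
    have e1 : ∑ u ∈ U, H.degree u
        = ∑ u ∈ U, #(U.filter (H.Adj u)) + ∑ u ∈ U, #(Uᶜ.filter (H.Adj u)) := by
      rw [← Finset.sum_add_distrib]; exact Finset.sum_congr rfl fun v _ => aux_deg H U v
    have e2 : ∑ w ∈ Uᶜ, H.degree w
        = ∑ w ∈ Uᶜ, #(U.filter (H.Adj w)) + ∑ w ∈ Uᶜ, #(Uᶜ.filter (H.Adj w)) := by
      rw [← Finset.sum_add_distrib]; exact Finset.sum_congr rfl fun v _ => aux_deg H U v
    have e3 : ∑ u ∈ U, #(U.filter (H.Adj u)) = k * (k - 1) := by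
      rw [Finset.sum_congr rfl (fun u hu => by
        rw [hclq u hu, Finset.card_erase_of_mem hu]), Finset.sum_const, smul_eq_mul]
    have e4 : ∑ w ∈ Uᶜ, #(Uᶜ.filter (H.Adj w)) = 0 :=
      Finset.sum_eq_zero fun w hw => by rw [hInd w hw, Finset.card_empty]
    rw [e1, e2, e3, e4, aux_cross]
    omega
  -- relate the filters to U
  have hAU : (univ.filter (fun v => k ≤ H.degree v)) ⊆ U := by
    intro v hv
    have hdv : k ≤ H.degree v := (Finset.mem_filter.1 hv).2
    by_contra hvU
    have := hWdeg v hvU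
    omega
  have hUAC : U ⊆ (univ.filter (fun v => k ≤ H.degree v + 1)) := fun v hv => Finset.mem_filter.2 ⟨Finset.mem_univ _, hUdeg v hv⟩
  refine ⟨k, Finset.card_le_card hAU, Finset.card_le_card hUAC, ?_⟩
  -- LHS = ∑_U deg
  have hL : ∑ v ∈ (univ.filter (fun v => k ≤ H.degree v)), H.degree v + (k - #(univ.filter (fun v => k ≤ H.degree v))) * (k - 1) = ∑ u ∈ U, H.degree u := by
    have hsd : ∑ v ∈ U \ (univ.filter (fun v => k ≤ H.degree v)), H.degree v + ∑ v ∈ (univ.filter (fun v => k ≤ H.degree v)), H.degree v = ∑ u ∈ U, H.degree u :=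
      Finset.sum_sdiff hAU
    have hconst : ∑ v ∈ U \ (univ.filter (fun v => k ≤ H.degree v)), H.degree v = #(U \ (univ.filter (fun v => k ≤ H.degree v))) * (k - 1) := by
      rw [Finset.sum_congr rfl (fun v hv => ?_), Finset.sum_const, smul_eq_mul]
      have hv1 := Finset.mem_sdiff.1 hv
      have h2 := hUdeg v hv1.1
      have h3 : ¬ k ≤ H.degree v := by
        intro h
        exact hv1.2 (Finset.mem_filter.2 ⟨Finset.mem_univ _, h⟩)
      omega
    rw [Finset.card_sdiff_of_subset hAU, ← hk] at hconst
    omega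
  -- RHS tail = ∑_{Uᶜ} deg
  have hR : ∑ v ∈ (univ.filter (fun v => H.degree v + 2 ≤ k)), H.degree v + (#(univ.filter (fun v => k ≤ H.degree v + 1)) - k) * (k - 1) = ∑ w ∈ Uᶜ, H.degree w := by
    have hpart : Uᶜ = (univ.filter (fun v => H.degree v + 2 ≤ k)) ∪ ((univ.filter (fun v => k ≤ H.degree v + 1)) \ U) := by
      ext v
      simp only [Finset.mem_compl, Finset.mem_union, Finset.mem_sdiff,
        Finset.mem_filter, Finset.mem_univ, true_and]
      constructor
      · intro hv
        have := hWdeg v hv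
        by_cases hb : H.degree v + 2 ≤ k
        · exact Or.inl hb
        · exact Or.inr ⟨by omega, hv⟩
      · rintro (hb | ⟨hac, hv⟩)
        · intro hvU
          have := hUdeg v hvU
          omega
        · exact hv
    have hdisj : Disjoint (univ.filter (fun v => H.degree v + 2 ≤ k)) ((univ.filter (fun v => k ≤ H.degree v + 1)) \ U) := by
      rw [Finset.disjoint_left]
      intro v hvB hv2
      have h1 : H.degree v + 2 ≤ k := (Finset.mem_filter.1 hvB).2
      have h2 : k ≤ H.degree v + 1 := (Finset.mem_filter.1 (Finset.mem_sdiff.1 hv2).1).2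
      omega
    have hACU : ∑ v ∈ (univ.filter (fun v => k ≤ H.degree v + 1)) \ U, H.degree v = #((univ.filter (fun v => k ≤ H.degree v + 1)) \ U) * (k - 1) := by
      rw [Finset.sum_congr rfl (fun v hv => ?_), Finset.sum_const, smul_eq_mul]
      have hv1 := Finset.mem_sdiff.1 hv
      have h2 : k ≤ H.degree v + 1 := (Finset.mem_filter.1 hv1.1).2
      have h3 := hWdeg v hv1.2
      omega
    rw [hpart, Finset.sum_union hdisj, hACU, Finset.card_sdiff_of_subset hUAC]
  omega

private lemma aux_split_of_Q (k : ℕ)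
    (h1 : #(univ.filter (fun v => k ≤ H.degree v)) ≤ k)
    (h2 : k ≤ #(univ.filter (fun v => k ≤ H.degree v + 1)))
    (h3 : (∑ v ∈ univ.filter (fun v => k ≤ H.degree v), H.degree v)
        + (k - #(univ.filter (fun v => k ≤ H.degree v))) * (k-1)
      = k*(k-1) + (∑ v ∈ univ.filter (fun v => H.degree v + 2 ≤ k), H.degree v)
        + (#(univ.filter (fun v => k ≤ H.degree v + 1)) - k) * (k-1)) :
    H.IsSplitGraph := by
  classical
  set A := univ.filter (fun v => k ≤ H.degree v) with hA
  set AC := univ.filter (fun v => k ≤ H.degree v + 1) with hAC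
  set B := univ.filter (fun v => H.degree v + 2 ≤ k) with hB
  have hAsubAC : A ⊆ AC := by
    intro v hv
    rw [hA, Finset.mem_filter] at hv
    rw [hAC, Finset.mem_filter]
    exact ⟨hv.1, by omega⟩
  have hCcard : #(AC \ A) = #AC - #A := Finset.card_sdiff_of_subset hAsubAC
  obtain ⟨C'', hC''sub, hC''card⟩ :=
    Finset.exists_subset_card_eq (show k - #A ≤ #(AC \ A) by omega)
  have hdisjAC'' : Disjoint A C'' :=
    Finset.disjoint_left.2 fun v hvA hvC => (Finset.mem_sdiff.1 (hC''sub hvC)).2 hvA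
  set S := A ∪ C'' with hS
  have hScard : #S = k := by
    rw [hS, Finset.card_union_of_disjoint hdisjAC'', hC''card]
    omega
  have hdegC : ∀ v ∈ AC \ A, H.degree v + 1 = k := by
    intro v hv
    obtain ⟨hv1, hv2⟩ := Finset.mem_sdiff.1 hv
    rw [hAC, Finset.mem_filter] at hv1
    rw [hA, Finset.mem_filter] at hv2
    simp only [Finset.mem_univ, true_and] at hv1 hv2
    omega
  have hsumS : ∑ v ∈ S, H.degree v = ∑ v ∈ A, H.degree v + (k - #A) * (k - 1) := by
    rw [hS, Finset.sum_union hdisjAC'']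
    congr 1
    rw [Finset.sum_congr rfl (fun v hv => show H.degree v = k - 1 by
      have := hdegC v (hC''sub hv); omega), Finset.sum_const, smul_eq_mul, hC''card]
  have hScomp : Sᶜ = B ∪ ((AC \ A) \ C'') := by
    ext v
    simp only [Finset.mem_compl, hS, Finset.mem_union, Finset.mem_sdiff, hA, hB, hAC,
      Finset.mem_filter, Finset.mem_univ, true_and]
    constructor
    · intro hv
      push_neg at hv
      by_cases hb : H.degree v + 2 ≤ k
      · exact Or.inl hb
      · exact Or.inr ⟨⟨by omega, by omega⟩, hv.2⟩
    · rintro (hb | ⟨⟨hac, hna⟩, hnc⟩) <;> rintro (h | hvC)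
      · omega
      · have := hdegC v (hC''sub hvC); omega
      · omega
      · exact hnc hvC
  have hdisjB : Disjoint B ((AC \ A) \ C'') := by
    rw [Finset.disjoint_left]
    intro v hvB hv2
    have h1 : H.degree v + 2 ≤ k := by
      rw [hB, Finset.mem_filter] at hvB; exact hvB.2
    have := hdegC v (Finset.mem_sdiff.1 hv2).1
    omega
  have hcard2 : #((AC \ A) \ C'') = #AC - k := by
    rw [Finset.card_sdiff_of_subset hC''sub, hC''card]
    omega
  have hsumSc : ∑ v ∈ Sᶜ, H.degree v
      = ∑ v ∈ B, H.degree v + (#AC - k) * (k - 1) := by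
    rw [hScomp, Finset.sum_union hdisjB]
    congr 1
    rw [Finset.sum_congr rfl (fun v hv => show H.degree v = k - 1 by
      have := hdegC v (Finset.mem_sdiff.1 hv).1; omega), Finset.sum_const, smul_eq_mul, hcard2]
  refine aux_split_of_eq H S ?_
  rw [hScard, hsumS, hsumSc]
  omega

end AuxSplit

section AuxTrans
open Finset
variable {β : Type*} [Fintype β] (H : SimpleGraph β) [DecidableRel H.Adj]

private lemma aux_trans (p : ℕ → Prop) [DecidablePred p] :
    (Multiset.map (fun v => H.degree v) Finset.univ.val).filter p
      = Multiset.map (fun v => H.degree v) (Finset.univ.filter (fun v => p (H.degree v))).val := by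
  rw [Multiset.filter_map, Finset.filter_val]
  rfl

lemma aux_trans_card (p : ℕ → Prop) [DecidablePred p] :
    ((Multiset.map (fun v => H.degree v) Finset.univ.val).filter p).card
      = #(Finset.univ.filter (fun v => p (H.degree v))) := by
  rw [aux_trans, Multiset.card_map]; rfl

lemma aux_trans_sum (p : ℕ → Prop) [DecidablePred p] :
    ((Multiset.map (fun v => H.degree v) Finset.univ.val).filter p).sum
      = ∑ v ∈ Finset.univ.filter (fun v => p (H.degree v)), H.degree v := by
  rw [aux_trans]; rfl

end AuxTrans

/-- If two finite simple graphs realize the same degree sequence (i.e. have equal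
multisets of vertex degrees) and one of them is a split graph, then so is the other. -/
theorem split_of_same_degree_multiset
    {α β : Type*} [Fintype α] [Fintype β]
    (G : SimpleGraph α) (H : SimpleGraph β)
    [DecidableRel G.Adj] [DecidableRel H.Adj]
    (hdeg : Multiset.map (fun v => G.degree v) Finset.univ.val =
            Multiset.map (fun v => H.degree v) Finset.univ.val)
    (hG : G.IsSplitGraph) : H.IsSplitGraph := by
  classical
  obtain ⟨k, h1, h2, h3⟩ := aux_Q_of_split G hG
  refine aux_split_of_Q H k ?_ ?_ ?_
  · rw [← aux_trans_card H (fun d => k ≤ d), ← hdeg, aux_trans_card G (fun d => k ≤ d)]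
    exact h1
  · rw [← aux_trans_card H (fun d => k ≤ d + 1), ← hdeg,
      aux_trans_card G (fun d => k ≤ d + 1)]
    exact h2
  · rw [← aux_trans_sum H (fun d => k ≤ d), ← aux_trans_card H (fun d => k ≤ d),
      ← aux_trans_sum H (fun d => d + 2 ≤ k), ← aux_trans_card H (fun d => k ≤ d + 1),
      ← hdeg,
      aux_trans_sum G (fun d => k ≤ d), aux_trans_card G (fun d => k ≤ d),
      aux_trans_sum G (fun d => d + 2 ≤ k), aux_trans_card G (fun d => k ≤ d + 1)]
    exact h3
end

section
/- Let G be a simple graph on n ≥ 1 vertices with degree sequence d₁ ≥ d₂ ≥ … ≥ dₙ, and let m be the largest index i with d_i ≥ i − 1 (m is well defined since d₁ ≥ 0). Then G is a split graph if and only if Σ_{i=1}^{m} d_i = m(m−1) + Σ_{i=m+1}^{n} d_i. -/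
open Finset

section
variable {n : ℕ} (hn : 1 ≤ n) (G : SimpleGraph (Fin n)) [DecidableRel G.Adj]
  (d : ℕ → ℕ) (hdeg : ∀ i : Fin n, G.degree i = d ((i : ℕ) + 1))

-- reindexing lemma
include hdeg in
theorem key_lemma (f : ℕ → ℕ) :
    ∀ k, k ≤ n → ∑ i ∈ Finset.Icc 1 k, f (d i)
      = ∑ v ∈ Finset.univ.filter (fun v : Fin n => (v : ℕ) < k), f (G.degree v) := by
  intro k hk
  induction k with
  | zero => simp
  | succ k ih =>
    have hk' : k ≤ n := Nat.le_of_succ_le hk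
    rw [Finset.sum_Icc_succ_top (by omega), ih hk']
    have hins : Finset.univ.filter (fun v : Fin n => (v : ℕ) < k + 1)
        = insert (⟨k, hk⟩ : Fin n) (Finset.univ.filter (fun v : Fin n => (v : ℕ) < k)) := by
      ext v
      simp only [Finset.mem_filter, Finset.mem_univ, true_and, Finset.mem_insert, Fin.ext_iff]
      omega
    rw [hins, Finset.sum_insert (by simp), hdeg ⟨k, hk⟩]
    simp [Nat.add_comm]

theorem card_filter_lt (k : ℕ) (hk : k ≤ n) :
    (Finset.univ.filter (fun v : Fin n => (v : ℕ) < k)).card = k := by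
  classical
  have : (Finset.univ.filter (fun v : Fin n => (v : ℕ) < k)).image Fin.val = Finset.range k := by
    ext i
    simp only [Finset.mem_image, Finset.mem_filter, Finset.mem_univ, true_and, Finset.mem_range]
    constructor
    · rintro ⟨v, hv, rfl⟩; exact hv
    · intro hi; exact ⟨⟨i, lt_of_lt_of_le hi hk⟩, hi, rfl⟩
  have h2 := Finset.card_image_of_injective
    (Finset.univ.filter (fun v : Fin n => (v : ℕ) < k)) (Fin.val_injective)
  rw [this] at h2
  simpa using h2.symm

end

section
variable {n : ℕ} (G : SimpleGraph (Fin n)) [DecidableRel G.Adj]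

/-- number of ordered adjacent pairs between A and B -/
def epairs (A B : Finset (Fin n)) : ℕ :=
  ∑ v ∈ A, ∑ w ∈ B, if G.Adj v w then 1 else 0

theorem epairs_symm (A B : Finset (Fin n)) : epairs G A B = epairs G B A := by
  unfold epairs
  rw [Finset.sum_comm]
  refine Finset.sum_congr rfl fun w _ => Finset.sum_congr rfl fun v _ => ?_
  simp [G.adj_comm]

theorem sum_degree_eq (A : Finset (Fin n)) :
    ∑ v ∈ A, G.degree v = epairs G A A + epairs G A Aᶜ := by
  unfold epairs
  rw [← Finset.sum_add_distrib]
  refine Finset.sum_congr rfl fun v _ => ?_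
  rw [Finset.sum_add_sum_compl A (fun w => if G.Adj v w then 1 else 0)]
  rw [SimpleGraph.degree, SimpleGraph.neighborFinset_eq_filter, Finset.card_filter]

theorem epairs_clique (A : Finset (Fin n))
    (hA : ∀ u ∈ A, ∀ v ∈ A, u ≠ v → G.Adj u v) :
    epairs G A A = A.card * (A.card - 1) := by
  unfold epairs
  have : ∀ v ∈ A, (∑ w ∈ A, if G.Adj v w then 1 else 0) = A.card - 1 := by
    intro v hv
    rw [← Finset.card_filter]
    have : A.filter (fun w => G.Adj v w) = A.erase v := by
      ext w
      simp only [Finset.mem_filter, Finset.mem_erase]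
      constructor
      · rintro ⟨hw, hadj⟩; exact ⟨(G.ne_of_adj hadj).symm, hw⟩
      · rintro ⟨hne, hw⟩; exact ⟨hw, hA v hv w hw (Ne.symm hne)⟩
    rw [this, Finset.card_erase_of_mem hv]
  rw [Finset.sum_congr rfl this, Finset.sum_const, smul_eq_mul]

theorem epairs_indep (A B : Finset (Fin n))
    (hA : ∀ u ∈ A, ∀ v ∈ B, ¬ G.Adj u v) :
    epairs G A B = 0 := by
  unfold epairs
  refine Finset.sum_eq_zero fun v hv => Finset.sum_eq_zero fun w hw => ?_
  simp [hA v hv w hw]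

end

theorem mpr_dir
    {n : ℕ} (hn : 1 ≤ n) (G : SimpleGraph (Fin n)) [DecidableRel G.Adj]
    (d : ℕ → ℕ)
    (hdeg : ∀ i : Fin n, G.degree i = d ((i : ℕ) + 1))
    (m : ℕ) (hm1 : 1 ≤ m) (hmn : m ≤ n)
    (hEq : ∑ i ∈ Finset.Icc 1 m, d i =
        m * (m - 1) + ∑ i ∈ Finset.Icc (m + 1) n, d i) :
    G.IsSplitGraph := by
  classical
  set A : Finset (Fin n) := Finset.univ.filter (fun v : Fin n => (v : ℕ) < m) with hA
  have hcardA : A.card = m := card_filter_lt m hmn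
  have hsum1 : ∑ i ∈ Finset.Icc 1 m, d i = ∑ v ∈ A, G.degree v := by
    simpa using key_lemma G d hdeg id m hmn
  have hsumn : ∑ i ∈ Finset.Icc 1 n, d i = ∑ v : Fin n, G.degree v := by
    have := key_lemma G d hdeg id n le_rfl
    simpa [Finset.filter_true_of_mem (fun (v : Fin n) _ => v.isLt)] using this
  have hsplit : ∑ i ∈ Finset.Icc 1 m, d i + ∑ i ∈ Finset.Icc (m+1) n, d i
      = ∑ i ∈ Finset.Icc 1 n, d i := by
    have hic : ∀ k : ℕ, Finset.Icc 1 k = Finset.Ioc 0 k := fun k => Finset.Icc_add_one_left_eq_Ioc 0 k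
    rw [hic m, hic n, Finset.Icc_add_one_left_eq_Ioc]
    exact Finset.sum_Ioc_consecutive d (Nat.zero_le m) hmn
  have hsum2 : ∑ i ∈ Finset.Icc (m+1) n, d i = ∑ v ∈ Aᶜ, G.degree v := by
    have htot := Finset.sum_add_sum_compl A (fun v => G.degree v)
    omega
  -- edge counting
  have hdegA := sum_degree_eq G A
  have hdegAc := sum_degree_eq G Aᶜ
  rw [compl_compl, epairs_symm G Aᶜ A] at hdegAc
  -- upper bound on epairs A A
  have hub : epairs G A A ≤ m * (m - 1) := by
    unfold epairs
    calc ∑ v ∈ A, ∑ w ∈ A, (if G.Adj v w then 1 else 0)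
        ≤ ∑ v ∈ A, (A.card - 1) := by
          refine Finset.sum_le_sum fun v hv => ?_
          rw [← Finset.card_filter]
          refine le_trans (Finset.card_le_card ?_) (le_of_eq (Finset.card_erase_of_mem hv))
          intro w hw
          simp only [Finset.mem_filter] at hw
          exact Finset.mem_erase.2 ⟨(G.ne_of_adj hw.2).symm, hw.1⟩
      _ = m * (m - 1) := by rw [Finset.sum_const, smul_eq_mul, hcardA]
  have hkey : epairs G A A = m * (m-1) ∧ epairs G Aᶜ Aᶜ = 0 := by
    constructor <;> omega
  refine ⟨{v | (v : ℕ) < m}, ?_, ?_⟩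
  · -- clique
    intro u hu v hv huv
    by_contra hadj
    have huA : u ∈ A := by simp [hA]; exact hu
    have hvA : v ∈ A := by simp [hA]; exact hv
    have hlt : epairs G A A < m * (m - 1) := by
      unfold epairs
      calc ∑ v ∈ A, ∑ w ∈ A, (if G.Adj v w then 1 else 0)
          < ∑ v ∈ A, (A.card - 1) := by
            refine Finset.sum_lt_sum (fun x hx => ?_) ⟨u, huA, ?_⟩
            · rw [← Finset.card_filter]
              refine le_trans (Finset.card_le_card ?_) (le_of_eq (Finset.card_erase_of_mem hx))
              intro w hw
              simp only [Finset.mem_filter] at hw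
              exact Finset.mem_erase.2 ⟨(G.ne_of_adj hw.2).symm, hw.1⟩
            · rw [← Finset.card_filter, ← Finset.card_erase_of_mem huA]
              refine Finset.card_lt_card ?_
              constructor
              · intro w hw
                simp only [Finset.mem_filter] at hw
                exact Finset.mem_erase.2 ⟨(G.ne_of_adj hw.2).symm, hw.1⟩
              · intro hsub
                have := hsub (Finset.mem_erase.2 ⟨Ne.symm huv, hvA⟩)
                simp only [Finset.mem_filter] at this
                exact hadj this.2
        _ = m * (m - 1) := by rw [Finset.sum_const, smul_eq_mul, hcardA]
    omega
  · -- independent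
    intro u hu v hv hadj
    have huA : u ∈ Aᶜ := by simp [hA]; simpa using hu
    have hvA : v ∈ Aᶜ := by simp [hA]; simpa using hv
    have := (Finset.sum_eq_zero_iff.1 hkey.2) u huA
    have := (Finset.sum_eq_zero_iff.1 this) v hvA
    simp [hadj] at this

theorem mp_dir
    {n : ℕ} (hn : 1 ≤ n) (G : SimpleGraph (Fin n)) [DecidableRel G.Adj]
    (d : ℕ → ℕ)
    (hdeg : ∀ i : Fin n, G.degree i = d ((i : ℕ) + 1))
    (hmono : ∀ i j : ℕ, 1 ≤ i → i ≤ j → j ≤ n → d j ≤ d i)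
    (m : ℕ) (hm1 : 1 ≤ m) (hmn : m ≤ n)
    (hm : m - 1 ≤ d m)
    (hmax : ∀ i : ℕ, 1 ≤ i → i ≤ n → i - 1 ≤ d i → i ≤ m)
    (hsplit : G.IsSplitGraph) :
    ∑ i ∈ Finset.Icc 1 m, d i =
        m * (m - 1) + ∑ i ∈ Finset.Icc (m + 1) n, d i := by
  classical
  obtain ⟨U₀, hU₀c, hU₀i⟩ := hsplit
  set valid : Finset (Fin n) → Prop :=
    fun U => (∀ u ∈ U, ∀ v ∈ U, u ≠ v → G.Adj u v) ∧
      (∀ u, u ∉ U → ∀ v, v ∉ U → ¬ G.Adj u v) with hvalid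
  have hS : (Finset.univ.filter valid).Nonempty := by
    refine ⟨U₀.toFinset, ?_⟩
    simp only [Finset.mem_filter, Finset.mem_univ, true_and, hvalid]
    exact ⟨fun u hu v hv => hU₀c u (Set.mem_toFinset.1 hu) v (Set.mem_toFinset.1 hv),
      fun u hu v hv => hU₀i u (fun h => hu (Set.mem_toFinset.2 h)) v
        (fun h => hv (Set.mem_toFinset.2 h))⟩
  obtain ⟨U, hUmem, hUmax⟩ := Finset.exists_max_image (Finset.univ.filter valid) Finset.card hS
  simp only [Finset.mem_filter, Finset.mem_univ, true_and] at hUmem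
  obtain ⟨hUc, hUi⟩ := hUmem
  have hUmax' : ∀ U' : Finset (Fin n), valid U' → U'.card ≤ U.card := by
    intro U' hU'
    exact hUmax U' (by simp only [Finset.mem_filter, Finset.mem_univ, true_and]; exact hU')
  set q := U.card with hq
  have hqn : q ≤ n := by
    have := Finset.card_le_univ U
    simpa using this
  -- q ≥ 1
  have hq1 : 1 ≤ q := by
    by_contra h
    have hU0 : U = ∅ := Finset.card_eq_zero.1 (by omega)
    have hnoadj : ∀ u v : Fin n, ¬ G.Adj u v := by
      intro u v
      exact hUi u (by simp [hU0]) v (by simp [hU0])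
    have : valid {⟨0, hn⟩} :=
      ⟨fun u hu v hv huv => by
        simp only [Finset.mem_singleton] at hu hv; exact absurd (hu.trans hv.symm) huv,
       fun u _ v _ => hnoadj u v⟩
    have h1 := hUmax' _ this
    rw [Finset.card_singleton] at h1
    omega
  -- every vertex not in U has degree < q
  have hW : ∀ w : Fin n, w ∉ U → G.degree w < q := by
    intro w hw
    have hnb : G.neighborFinset w ⊆ U := by
      intro x hx
      rw [SimpleGraph.mem_neighborFinset] at hx
      by_contra hxU
      exact hUi w hw x hxU hx
    have hle : G.degree w ≤ q := Finset.card_le_card hnb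
    rcases lt_or_eq_of_le hle with h | h
    · exact h
    · exfalso
      have hnbU : G.neighborFinset w = U :=
        Finset.eq_of_subset_of_card_le hnb
          (by rw [SimpleGraph.card_neighborFinset_eq_degree]; omega)
      have hvins : valid (insert w U) := by
        constructor
        · intro u hu v hv huv
          rcases Finset.mem_insert.1 hu with rfl | hu' <;>
            rcases Finset.mem_insert.1 hv with rfl | hv'
          · exact absurd rfl huv
          · have : v ∈ G.neighborFinset u := hnbU ▸ hv'
            rwa [SimpleGraph.mem_neighborFinset] at this
          · have : u ∈ G.neighborFinset v := hnbU ▸ hu'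
            rw [SimpleGraph.mem_neighborFinset] at this
            exact this.symm
          · exact hUc u hu' v hv' huv
        · intro u hu v hv
          exact hUi u (fun h => hu (Finset.mem_insert_of_mem h))
            v (fun h => hv (Finset.mem_insert_of_mem h))
      have := hUmax' _ hvins
      rw [Finset.card_insert_of_notMem hw] at this
      omega
  -- every vertex in U has degree ≥ q - 1
  have hUdeg : ∀ u ∈ U, q - 1 ≤ G.degree u := by
    intro u hu
    have hsub : U.erase u ⊆ G.neighborFinset u := by
      intro w hw
      obtain ⟨hne, hwU⟩ := Finset.mem_erase.1 hw
      rw [SimpleGraph.mem_neighborFinset]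
      exact hUc u hu w hwU (Ne.symm hne)
    have := Finset.card_le_card hsub
    rwa [Finset.card_erase_of_mem hu] at this
  -- q ≤ m
  have hqm : q ≤ m := by
    refine hmax q hq1 hqn ?_
    by_contra hdq
    push_neg at hdq
    have hsub : U ⊆ Finset.univ.filter (fun v : Fin n => (v : ℕ) < q - 1) := by
      intro u hu
      simp only [Finset.mem_filter, Finset.mem_univ, true_and]
      by_contra hge
      push_neg at hge
      have h1 : q ≤ (u : ℕ) + 1 := by omega
      have h2 : d ((u : ℕ) + 1) ≤ d q := hmono q ((u:ℕ)+1) hq1 h1 (by omega)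
      have h3 : q - 1 ≤ d ((u : ℕ) + 1) := hdeg u ▸ hUdeg u hu
      omega
    have := Finset.card_le_card hsub
    rw [card_filter_lt (q-1) (by omega)] at this
    omega
  -- m ≤ q
  have hmq : m ≤ q := by
    by_contra h
    push_neg at h
    have hsub : Finset.univ.filter (fun v : Fin n => (v : ℕ) < q + 1) ⊆ U := by
      intro v hv
      simp only [Finset.mem_filter, Finset.mem_univ, true_and] at hv
      by_contra hvU
      have hlt := hW v hvU
      have h1 : (v : ℕ) + 1 ≤ m := by omega
      have h2 : d m ≤ d ((v : ℕ) + 1) := hmono ((v:ℕ)+1) m (by omega) h1 hmn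
      have h3 : q ≤ d m := by omega
      have := hdeg v
      omega
    have := Finset.card_le_card hsub
    rw [card_filter_lt (q+1) (by omega)] at this
    omega
  have hqeq : q = m := le_antisymm hqm hmq
  -- degree bounds with m
  have hWm : ∀ w : Fin n, w ∉ U → G.degree w ≤ m - 1 := fun w hw => by
    have := hW w hw; omega
  have hUm : ∀ u ∈ U, m - 1 ≤ G.degree u := fun u hu => hqeq ▸ hUdeg u hu
  -- d (m+1) ≤ m - 1 when m < n (used via: for i in Icc (m+1) n, d i ≤ m-1)
  have hdtail : ∀ i ∈ Finset.Icc (m+1) n, d i ≤ m - 1 := by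
    intro i hi
    obtain ⟨hi1, hi2⟩ := Finset.mem_Icc.1 hi
    have h1 : d i ≤ d (m+1) := hmono (m+1) i (by omega) hi1 hi2
    have h2 : d (m+1) < m := by
      by_contra hcon
      push_neg at hcon
      have := hmax (m+1) (by omega) (by omega) (by omega)
      omega
    omega
  have hdhead : ∀ i ∈ Finset.Icc 1 m, m - 1 ≤ d i := by
    intro i hi
    obtain ⟨hi1, hi2⟩ := Finset.mem_Icc.1 hi
    exact le_trans hm (hmono i m hi1 hi2 hmn)
  -- sum splitting over Icc
  have icc_split : ∀ f : ℕ → ℕ, ∑ i ∈ Finset.Icc 1 m, f i + ∑ i ∈ Finset.Icc (m+1) n, f i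
      = ∑ i ∈ Finset.Icc 1 n, f i := by
    intro f
    have hic : ∀ k : ℕ, Finset.Icc 1 k = Finset.Ioc 0 k := fun k => Finset.Icc_add_one_left_eq_Ioc 0 k
    rw [hic m, hic n, Finset.Icc_add_one_left_eq_Ioc]
    exact Finset.sum_Ioc_consecutive f (Nat.zero_le m) hmn
  -- the truncated-sum computation
  set c := m - 1 with hc
  have hm11 : m + 1 - 1 = m := by omega
  have hT1 : ∑ i ∈ Finset.Icc 1 m, d i = m * c + ∑ i ∈ Finset.Icc 1 m, (d i - c) := by
    have h := Finset.sum_congr rfl fun i hi => (Nat.add_sub_cancel' (hdhead i hi)).symm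
    rw [h, Finset.sum_add_distrib, Finset.sum_const, smul_eq_mul, Nat.card_Icc, hm11]
  have hT2 : ∑ i ∈ Finset.Icc 1 m, (d i - c) = ∑ i ∈ Finset.Icc 1 n, (d i - c) := by
    rw [← icc_split (fun i => d i - c)]
    have hz : ∑ i ∈ Finset.Icc (m+1) n, (d i - c) = 0 :=
      Finset.sum_eq_zero fun i hi => by have := hdtail i hi; omega
    omega
  have hT3 : ∑ i ∈ Finset.Icc 1 n, (d i - c) = ∑ v : Fin n, (G.degree v - c) := by
    have h := key_lemma G d hdeg (fun x => x - c) n le_rfl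
    simpa [Finset.filter_true_of_mem (fun (v : Fin n) _ => v.isLt)] using h
  have hT4 : ∑ v : Fin n, (G.degree v - c) = ∑ v ∈ U, (G.degree v - c) := by
    rw [← Finset.sum_add_sum_compl U (fun v => G.degree v - c)]
    have hz : ∑ v ∈ Uᶜ, (G.degree v - c) = 0 :=
      Finset.sum_eq_zero fun v hv => by
        have := hWm v (Finset.mem_compl.1 hv); omega
    omega
  have hcardU : U.card = m := hqeq
  have hT5 : ∑ v ∈ U, G.degree v = m * c + ∑ v ∈ U, (G.degree v - c) := by
    have h := Finset.sum_congr rfl fun v hv => (Nat.add_sub_cancel' (hUm v hv)).symm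
    rw [h, Finset.sum_add_distrib, Finset.sum_const, smul_eq_mul, hcardU]
  have hSU : ∑ i ∈ Finset.Icc 1 m, d i = ∑ v ∈ U, G.degree v := by
    rw [hT1, hT2, hT3, hT4, ← hT5]
  have hsumn : ∑ i ∈ Finset.Icc 1 n, d i = ∑ v : Fin n, G.degree v := by
    have h := key_lemma G d hdeg id n le_rfl
    simpa [Finset.filter_true_of_mem (fun (v : Fin n) _ => v.isLt)] using h
  have hSW : ∑ i ∈ Finset.Icc (m+1) n, d i = ∑ v ∈ Uᶜ, G.degree v := by
    have h1 := icc_split d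
    have h2 := Finset.sum_add_sum_compl U (fun v => G.degree v)
    omega
  -- edge counting finish
  have hA1 := sum_degree_eq G U
  have hA2 := sum_degree_eq G Uᶜ
  rw [compl_compl, epairs_symm G Uᶜ U] at hA2
  have hcl : epairs G U U = m * (m - 1) := by
    rw [epairs_clique G U hUc, hcardU]
  have hin : epairs G Uᶜ Uᶜ = 0 :=
    epairs_indep G Uᶜ Uᶜ (fun u hu v hv =>
      hUi u (Finset.mem_compl.1 hu) v (Finset.mem_compl.1 hv))
  rw [hSU, hSW, hA1, hA2, hcl, hin, hc, Nat.zero_add]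

/-- **Hammer–Simeone.**  Let `G` be a simple graph on `n ≥ 1` vertices whose degree
sequence, listed in nonincreasing order, is `d 1 ≥ d 2 ≥ ⋯ ≥ d n` (vertex `i : Fin n`
has degree `d (i+1)`), and let `m` be the largest index `i ∈ [1, n]` with `d i ≥ i - 1`.
Then `G` is a split graph iff `∑_{i=1}^m d i = m (m - 1) + ∑_{i=m+1}^n d i`. -/
theorem isSplitGraph_iff_hammer_simeone
    {n : ℕ} (hn : 1 ≤ n) (G : SimpleGraph (Fin n)) [DecidableRel G.Adj]
    (d : ℕ → ℕ)
    (hdeg : ∀ i : Fin n, G.degree i = d ((i : ℕ) + 1))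
    (hmono : ∀ i j : ℕ, 1 ≤ i → i ≤ j → j ≤ n → d j ≤ d i)
    (m : ℕ) (hm1 : 1 ≤ m) (hmn : m ≤ n)
    (hm : m - 1 ≤ d m)
    (hmax : ∀ i : ℕ, 1 ≤ i → i ≤ n → i - 1 ≤ d i → i ≤ m) :
    G.IsSplitGraph ↔
      ∑ i ∈ Finset.Icc 1 m, d i =
        m * (m - 1) + ∑ i ∈ Finset.Icc (m + 1) n, d i :=
  ⟨mp_dir hn G d hdeg hmono m hm1 hmn hm hmax, mpr_dir hn G d hdeg m hm1 hmn⟩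
end

section
/- Let G be a simple graph with vertices v₁, …, vₙ such that deg(v_i) = d_i and d₁ ≥ d₂ ≥ … ≥ dₙ, and let m be the largest index i with d_i ≥ i − 1. If Σ_{i=1}^{m} d_i = m(m−1) + Σ_{i=m+1}^{n} d_i, then {v₁, …, v_m} induces a clique in G and {v_{m+1}, …, vₙ} induces an independent set in G. -/
/-- Let `G` be a simple graph on vertices `v₁, …, vₙ` (vertex `i : Fin n` playing the
role of `v_{i+1}`) with `deg v_i = d i` and `d 1 ≥ d 2 ≥ ⋯ ≥ d n`, and let `m` be the
largest index `i` with `d i ≥ i - 1`.  If `∑_{i=1}^m d i = m(m-1) + ∑_{i=m+1}^n d i`,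
then the first `m` vertices induce a clique and the remaining vertices induce an
independent set. -/
theorem clique_and_indep_of_hammer_simeone_eq
    {n : ℕ} (hn : 1 ≤ n) (G : SimpleGraph (Fin n)) [DecidableRel G.Adj]
    (d : ℕ → ℕ)
    (hdeg : ∀ i : Fin n, G.degree i = d ((i : ℕ) + 1))
    (hmono : ∀ i j : ℕ, 1 ≤ i → i ≤ j → j ≤ n → d j ≤ d i)
    (m : ℕ) (hm1 : 1 ≤ m) (hmn : m ≤ n)
    (hm : m - 1 ≤ d m)
    (hmax : ∀ i : ℕ, 1 ≤ i → i ≤ n → i - 1 ≤ d i → i ≤ m)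
    (hsum : ∑ i ∈ Finset.Icc 1 m, d i =
      m * (m - 1) + ∑ i ∈ Finset.Icc (m + 1) n, d i) :
    (∀ i j : Fin n, (i : ℕ) < m → (j : ℕ) < m → i ≠ j → G.Adj i j) ∧
    (∀ i j : Fin n, m ≤ (i : ℕ) → m ≤ (j : ℕ) → ¬ G.Adj i j) := by
  classical
  set A : Finset (Fin n) := Finset.univ.filter (fun i => (i : ℕ) < m) with hAdef
  set B : Finset (Fin n) := Finset.univ.filter (fun i => ¬ (i : ℕ) < m) with hBdef
  have hmemA : ∀ i : Fin n, i ∈ A ↔ (i : ℕ) < m := by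
    intro i; simp [hAdef]
  have hmemB : ∀ i : Fin n, i ∈ B ↔ m ≤ (i : ℕ) := by
    intro i; simp [hBdef, not_lt]
  -- degree decomposition
  have hdegsplit : ∀ i : Fin n,
      G.degree i = (A.filter (G.Adj i)).card + (B.filter (G.Adj i)).card := by
    intro i
    rw [← SimpleGraph.card_neighborFinset_eq_degree, SimpleGraph.neighborFinset_eq_filter]
    rw [hAdef, hBdef, Finset.filter_filter, Finset.filter_filter, ← Finset.card_union_of_disjoint]
    · congr 1
      ext j
      simp only [Finset.mem_union, Finset.mem_filter, Finset.mem_univ, true_and]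
      tauto
    · rw [Finset.disjoint_filter]
      tauto
  -- translate the Icc sums into sums over A and B
  have hA : ∑ i ∈ A, G.degree i = ∑ k ∈ Finset.Icc 1 m, d k := by
    rw [Finset.sum_nbij' (i := fun (a : Fin n) => (a : ℕ) + 1)
      (j := fun k => (⟨min (k - 1) (n - 1), by omega⟩ : Fin n))]
    · intro a ha; rw [hmemA] at ha; simp [Finset.mem_Icc]; omega
    · intro k hk; simp only [Finset.mem_Icc] at hk; rw [hmemA]; simp; omega
    · intro a ha; rw [hmemA] at ha
      ext; simp; omega
    · intro k hk; simp only [Finset.mem_Icc] at hk; simp; omega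
    · intro a ha; rw [hdeg a]
  have hB : ∑ i ∈ B, G.degree i = ∑ k ∈ Finset.Icc (m + 1) n, d k := by
    rw [Finset.sum_nbij' (i := fun (a : Fin n) => (a : ℕ) + 1)
      (j := fun k => (⟨min (k - 1) (n - 1), by omega⟩ : Fin n))]
    · intro a ha; rw [hmemB] at ha; simp [Finset.mem_Icc]; omega
    · intro k hk; simp only [Finset.mem_Icc] at hk; rw [hmemB]; simp; omega
    · intro a ha; rw [hmemB] at ha
      ext; simp; omega
    · intro k hk; simp only [Finset.mem_Icc] at hk; simp; omega
    · intro a ha; rw [hdeg a]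
  have hcardA : A.card = m := by
    rw [Finset.card_nbij' (i := fun (a : Fin n) => (a : ℕ) + 1)
      (j := fun k => (⟨min (k - 1) (n - 1), by omega⟩ : Fin n)) (t := Finset.Icc 1 m)]
    · simp
    · intro a ha; rw [Finset.mem_coe, hmemA] at ha; simp [Finset.mem_Icc]; omega
    · intro k hk; simp only [Finset.mem_coe, Finset.mem_Icc] at hk; rw [Finset.mem_coe, hmemA]; simp; omega
    · intro a ha; rw [Finset.mem_coe, hmemA] at ha
      ext; simp; omega
    · intro k hk; simp only [Finset.mem_coe, Finset.mem_Icc] at hk; simp; omega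
  -- crossing edges counted from both sides are equal
  have hcross : ∑ i ∈ A, (B.filter (G.Adj i)).card = ∑ j ∈ B, (A.filter (G.Adj j)).card := by
    simp only [Finset.card_filter]
    rw [Finset.sum_comm]
    apply Finset.sum_congr rfl
    intro j _
    apply Finset.sum_congr rfl
    intro i _
    simp [G.adj_comm]
  -- bound on internal A-sum
  have hAle : ∀ i ∈ A, (A.filter (G.Adj i)).card ≤ m - 1 := by
    intro i hi
    have hsub : A.filter (G.Adj i) ⊆ A.erase i := by
      intro j hj
      simp only [Finset.mem_filter] at hj
      refine Finset.mem_erase.2 ⟨?_, hj.1⟩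
      rintro rfl; exact G.irrefl hj.2
    calc (A.filter (G.Adj i)).card ≤ (A.erase i).card := Finset.card_le_card hsub
      _ = m - 1 := by rw [Finset.card_erase_of_mem hi, hcardA]
  have hSA_le : ∑ i ∈ A, (A.filter (G.Adj i)).card ≤ m * (m - 1) := by
    calc ∑ i ∈ A, (A.filter (G.Adj i)).card ≤ ∑ _i ∈ A, (m - 1) :=
        Finset.sum_le_sum hAle
      _ = m * (m - 1) := by rw [Finset.sum_const, hcardA, smul_eq_mul]
  -- main counting identity
  have hkey : ∑ i ∈ A, (A.filter (G.Adj i)).card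
      = m * (m - 1) + ∑ j ∈ B, (B.filter (G.Adj j)).card := by
    have h1 : ∑ i ∈ A, G.degree i = ∑ i ∈ A, (A.filter (G.Adj i)).card
        + ∑ i ∈ A, (B.filter (G.Adj i)).card := by
      rw [← Finset.sum_add_distrib]; exact Finset.sum_congr rfl fun i _ => hdegsplit i
    have h2 : ∑ j ∈ B, G.degree j = ∑ j ∈ B, (A.filter (G.Adj j)).card
        + ∑ j ∈ B, (B.filter (G.Adj j)).card := by
      rw [← Finset.sum_add_distrib]; exact Finset.sum_congr rfl fun i _ => hdegsplit i
    rw [hA, hsum, ← hB, h2] at h1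
    omega
  have hSB : ∑ j ∈ B, (B.filter (G.Adj j)).card = 0 := by omega
  have hSA : ∑ i ∈ A, (A.filter (G.Adj i)).card = ∑ _i ∈ A, (m - 1) := by
    rw [Finset.sum_const, hcardA, smul_eq_mul]; omega
  have hAeq : ∀ i ∈ A, (A.filter (G.Adj i)).card = m - 1 :=
    (Finset.sum_eq_sum_iff_of_le hAle).1 hSA
  constructor
  · intro i j hi hj hij
    have hiA : i ∈ A := (hmemA i).2 hi
    have hjA : j ∈ A := (hmemA j).2 hj
    have hsub : A.filter (G.Adj i) ⊆ A.erase i := by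
      intro k hk
      simp only [Finset.mem_filter] at hk
      refine Finset.mem_erase.2 ⟨?_, hk.1⟩
      rintro rfl; exact G.irrefl hk.2
    have heq : A.filter (G.Adj i) = A.erase i := by
      apply Finset.eq_of_subset_of_card_le hsub
      rw [Finset.card_erase_of_mem hiA, hcardA, hAeq i hiA]
    have : j ∈ A.filter (G.Adj i) := by
      rw [heq]; exact Finset.mem_erase.2 ⟨hij.symm, hjA⟩
    exact (Finset.mem_filter.1 this).2
  · intro i j hi hj hadj
    have hiB : i ∈ B := (hmemB i).2 hi
    have hjB : j ∈ B := (hmemB j).2 hj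
    have h0 : (B.filter (G.Adj i)).card = 0 := by
      have := Finset.sum_eq_zero_iff.1 hSB i hiB
      exact this
    have : j ∈ B.filter (G.Adj i) := Finset.mem_filter.2 ⟨hjB, hadj⟩
    rw [Finset.card_eq_zero.1 h0] at this
    exact absurd this (Finset.notMem_empty j)
end

section
/- Let G be a simple graph on n vertices with degree sequence d₁ ≥ d₂ ≥ … ≥ dₙ. Then G is decomposable if and only if there exist nonnegative integers p, q with 0 < p + q < n and Σ_{i=1}^{p} d_i = p(n − q − 1) + Σ_{i=n−q+1}^{n} d_i. -/
/-- A simple graph `G` on vertex set `V` is *decomposable* (in the sense of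
Tyshkevich) if `V` can be partitioned as `V = U ⊔ H ⊔ W` with `U ∪ W` nonempty and
`H` nonempty, such that `U` induces a clique, `W` induces an independent set, every
vertex of `U` is adjacent to every vertex of `H`, and no vertex of `W` is adjacent to
any vertex of `H`. -/
def SimpleGraph.IsDecomposable {V : Type*} (G : SimpleGraph V) : Prop :=
  ∃ U H W : Set V,
    (U ∪ H ∪ W = Set.univ) ∧
    Disjoint U H ∧ Disjoint U W ∧ Disjoint H W ∧
    (U ∪ W).Nonempty ∧ H.Nonempty ∧
    (∀ u ∈ U, ∀ v ∈ U, u ≠ v → G.Adj u v) ∧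
    (∀ u ∈ W, ∀ v ∈ W, ¬ G.Adj u v) ∧
    (∀ u ∈ U, ∀ h ∈ H, G.Adj u h) ∧
    (∀ w ∈ W, ∀ h ∈ H, ¬ G.Adj w h)


open Finset

namespace TyshkevichAux

variable {n : ℕ}

lemma strictMono_gap {p : ℕ} {f : Fin p → Fin n} (hf : StrictMono f) :
    ∀ (j : ℕ) (k : Fin p) (h : (k : ℕ) + j < p), (f k : ℕ) + j ≤ (f ⟨(k : ℕ) + j, h⟩ : ℕ) := by
  intro j
  induction j with
  | zero => intro k h; simp
  | succ j ih =>
      intro k h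
      have h1 : (k : ℕ) + j < p := by omega
      have h2 := ih k h1
      have h3 : f ⟨(k : ℕ) + j, h1⟩ < f ⟨(k : ℕ) + (j + 1), h⟩ := by
        apply hf
        simp [Fin.lt_def]
      have h4 := Fin.lt_def.mp h3
      omega

lemma le_orderEmbOfFin (A : Finset (Fin n)) {p : ℕ} (h : A.card = p) (k : Fin p) :
    (k : ℕ) ≤ (A.orderEmbOfFin h k : ℕ) := by
  have hp : 0 < p := lt_of_le_of_lt (Nat.zero_le _) k.2
  have h0 : ((⟨0, hp⟩ : Fin p) : ℕ) + (k : ℕ) < p := by simp [k.2]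
  have hgap := strictMono_gap (A.orderEmbOfFin h).strictMono (k : ℕ) ⟨0, hp⟩ h0
  have heq : (⟨((⟨0, hp⟩ : Fin p) : ℕ) + (k : ℕ), h0⟩ : Fin p) = k := by
    ext; simp
  rw [heq] at hgap
  omega

lemma orderEmbOfFin_le (A : Finset (Fin n)) {q : ℕ} (h : A.card = q) (k : Fin q) :
    (A.orderEmbOfFin h k : ℕ) + q ≤ n + (k : ℕ) := by
  have hk : (k : ℕ) < q := k.2
  have h0 : (k : ℕ) + (q - 1 - (k : ℕ)) < q := by omega
  have hgap := strictMono_gap (A.orderEmbOfFin h).strictMono (q - 1 - (k : ℕ)) k h0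
  have hlt : ((A.orderEmbOfFin h ⟨(k : ℕ) + (q - 1 - (k : ℕ)), h0⟩ : Fin n) : ℕ) < n :=
    (A.orderEmbOfFin h _).2
  omega

lemma sum_eq_sum_fin (A : Finset (Fin n)) {p : ℕ} (h : A.card = p) (g : Fin n → ℕ) :
    ∑ a ∈ A, g a = ∑ k : Fin p, g (A.orderEmbOfFin h k) := by
  have himg : Finset.image (A.orderEmbOfFin h) Finset.univ = A := by
    apply Finset.coe_injective
    simp
  conv_lhs => rw [← himg]
  exact Finset.sum_image (fun a _ b _ hab => (A.orderEmbOfFin h).injective hab)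

lemma sum_Icc_one (d : ℕ → ℕ) (p : ℕ) :
    ∑ i ∈ Icc 1 p, d i = ∑ k ∈ range p, d (k + 1) := by
  rw [← Finset.Ico_add_one_right_eq_Icc, Finset.sum_Ico_eq_sum_range]
  simp [add_comm]

lemma sum_Icc_top (d : ℕ → ℕ) {q : ℕ} (hq : q ≤ n) :
    ∑ i ∈ Icc (n - q + 1) n, d i = ∑ k ∈ range q, d (n - q + k + 1) := by
  rw [← Finset.Ico_add_one_right_eq_Icc, Finset.sum_Ico_eq_sum_range]
  have h1 : n + 1 - (n - q + 1) = q := by omega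
  rw [h1]
  exact Finset.sum_congr rfl fun j _ => by congr 1; omega

lemma sum_filter_lt (g : ℕ → ℕ) {p : ℕ} (hpn : p ≤ n) :
    ∑ i ∈ univ.filter (fun i : Fin n => (i : ℕ) < p), g (i : ℕ) = ∑ k ∈ range p, g k := by
  rw [Finset.sum_filter, Fin.sum_univ_eq_sum_range (fun k => if k < p then g k else 0) n,
    ← Finset.sum_filter]
  congr 1
  ext k
  simp only [mem_filter, mem_range]
  omega

lemma sum_filter_ge (g : ℕ → ℕ) {q : ℕ} (hq : q ≤ n) :
    ∑ i ∈ univ.filter (fun i : Fin n => n - q ≤ (i : ℕ)), g (i : ℕ) =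
      ∑ k ∈ range q, g (n - q + k) := by
  rw [Finset.sum_filter, Fin.sum_univ_eq_sum_range (fun k => if n - q ≤ k then g k else 0) n,
    ← Finset.sum_filter]
  have hfil : (range n).filter (fun k => n - q ≤ k) = Ico (n - q) n := by
    ext k
    simp only [mem_filter, mem_range, mem_Ico]
    omega
  rw [hfil, Finset.sum_Ico_eq_sum_range]
  have h1 : n - (n - q) = q := by omega
  rw [h1]

lemma card_filter_lt {p : ℕ} (hpn : p ≤ n) :
    (univ.filter (fun i : Fin n => (i : ℕ) < p)).card = p := by
  rw [Finset.card_eq_sum_ones, sum_filter_lt (fun _ => 1) hpn, Finset.sum_const,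
    Finset.card_range, smul_eq_mul, mul_one]

lemma card_filter_ge {q : ℕ} (hq : q ≤ n) :
    (univ.filter (fun i : Fin n => n - q ≤ (i : ℕ))).card = q := by
  rw [Finset.card_eq_sum_ones, sum_filter_ge (fun _ => 1) hq, Finset.sum_const,
    Finset.card_range, smul_eq_mul, mul_one]

variable (G : SimpleGraph (Fin n)) [DecidableRel G.Adj]

lemma card_inter_nbr (u : Fin n) (T : Finset (Fin n)) :
    (G.neighborFinset u ∩ T).card = ∑ t ∈ T, if G.Adj u t then 1 else 0 := by
  have h : G.neighborFinset u ∩ T = T.filter (fun t => G.Adj u t) := by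
    ext t; simp [and_comm]
  rw [h, Finset.card_filter]

lemma double_count (S T : Finset (Fin n)) :
    ∑ u ∈ S, (G.neighborFinset u ∩ T).card = ∑ t ∈ T, (G.neighborFinset t ∩ S).card := by
  simp only [card_inter_nbr]
  rw [Finset.sum_comm]
  exact Finset.sum_congr rfl fun t _ => Finset.sum_congr rfl fun u _ =>
    if_congr (G.adj_comm u t) rfl rfl

lemma deg_split (u : Fin n) (T : Finset (Fin n)) :
    G.degree u = (G.neighborFinset u ∩ Tᶜ).card + (G.neighborFinset u ∩ T).card := by
  have hU : G.neighborFinset u = (G.neighborFinset u ∩ Tᶜ) ∪ (G.neighborFinset u ∩ T) := by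
    rw [← Finset.inter_union_distrib_left]
    ext v
    simp
    tauto
  have hd : Disjoint (G.neighborFinset u ∩ Tᶜ) (G.neighborFinset u ∩ T) := by
    apply Finset.disjoint_left.mpr
    intro v hv hv'
    exact (Finset.mem_compl.mp (Finset.mem_inter.mp hv).2) (Finset.mem_inter.mp hv').2
  rw [show G.degree u = (G.neighborFinset u).card from rfl]
  conv_lhs => rw [hU]
  rw [Finset.card_union_of_disjoint hd]

lemma nbr_compl_subset (u : Fin n) (T : Finset (Fin n)) :
    G.neighborFinset u ∩ Tᶜ ⊆ Tᶜ.erase u := by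
  intro v hv
  rcases Finset.mem_inter.mp hv with ⟨h1, h2⟩
  rw [Finset.mem_erase]
  refine ⟨fun hvu => ?_, h2⟩
  subst hvu
  exact G.notMem_neighborFinset_self v h1

lemma card_compl_erase {T : Finset (Fin n)} {u : Fin n} (hu : u ∉ T) :
    (Tᶜ.erase u).card = n - T.card - 1 := by
  rw [Finset.card_erase_of_mem (Finset.mem_compl.mpr hu), Finset.card_compl]
  simp

lemma nbr_compl_le (u : Fin n) {T : Finset (Fin n)} (hu : u ∉ T) :
    (G.neighborFinset u ∩ Tᶜ).card ≤ n - T.card - 1 := by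
  calc (G.neighborFinset u ∩ Tᶜ).card ≤ (Tᶜ.erase u).card :=
        Finset.card_le_card (nbr_compl_subset G u T)
    _ = n - T.card - 1 := card_compl_erase hu

lemma main_ineq (S T : Finset (Fin n)) (hST : Disjoint S T) :
    ∑ u ∈ S, G.degree u ≤ S.card * (n - T.card - 1) + ∑ t ∈ T, G.degree t := by
  calc ∑ u ∈ S, G.degree u
      = ∑ u ∈ S, ((G.neighborFinset u ∩ Tᶜ).card + (G.neighborFinset u ∩ T).card) :=
        Finset.sum_congr rfl fun u _ => deg_split G u T
    _ = ∑ u ∈ S, (G.neighborFinset u ∩ Tᶜ).card + ∑ u ∈ S, (G.neighborFinset u ∩ T).card :=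
        Finset.sum_add_distrib
    _ ≤ S.card * (n - T.card - 1) + ∑ t ∈ T, G.degree t := by
        apply add_le_add
        · calc ∑ u ∈ S, (G.neighborFinset u ∩ Tᶜ).card
              ≤ ∑ _u ∈ S, (n - T.card - 1) :=
                Finset.sum_le_sum fun u hu => nbr_compl_le G u (Finset.disjoint_left.mp hST hu)
            _ = S.card * (n - T.card - 1) := by rw [Finset.sum_const, smul_eq_mul]
        · rw [double_count]
          exact Finset.sum_le_sum fun t _ =>
            Finset.card_le_card Finset.inter_subset_left

variable {d : ℕ → ℕ}

lemma sum_deg_le_Icc (hdeg : ∀ i : Fin n, G.degree i = d ((i : ℕ) + 1))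
    (hmono : ∀ i j : ℕ, 1 ≤ i → i ≤ j → j ≤ n → d j ≤ d i) (A : Finset (Fin n)) :
    ∑ a ∈ A, G.degree a ≤ ∑ i ∈ Icc 1 A.card, d i := by
  rw [sum_Icc_one, sum_eq_sum_fin A rfl (fun a => G.degree a),
    ← Fin.sum_univ_eq_sum_range (fun k => d (k + 1)) A.card]
  apply Finset.sum_le_sum
  intro k _
  rw [hdeg]
  exact hmono ((k : ℕ) + 1) ((A.orderEmbOfFin rfl k : ℕ) + 1)
    (by omega) (by have := le_orderEmbOfFin A rfl k; omega)
    (by have := (A.orderEmbOfFin rfl k).2; omega)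

lemma sum_deg_ge_Icc (hdeg : ∀ i : Fin n, G.degree i = d ((i : ℕ) + 1))
    (hmono : ∀ i j : ℕ, 1 ≤ i → i ≤ j → j ≤ n → d j ≤ d i) (B : Finset (Fin n)) :
    ∑ i ∈ Icc (n - B.card + 1) n, d i ≤ ∑ b ∈ B, G.degree b := by
  have hq : B.card ≤ n := by simpa using Finset.card_le_univ B
  rw [sum_Icc_top d hq, sum_eq_sum_fin B rfl (fun b => G.degree b),
    ← Fin.sum_univ_eq_sum_range (fun k => d (n - B.card + k + 1)) B.card]
  apply Finset.sum_le_sum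
  intro k _
  rw [hdeg]
  exact hmono ((B.orderEmbOfFin rfl k : ℕ) + 1) (n - B.card + (k : ℕ) + 1)
    (by omega) (by have := orderEmbOfFin_le B rfl k; omega)
    (by have : (k : ℕ) < B.card := k.2; omega)

end TyshkevichAux

open Finset TyshkevichAux

/-- **Tyshkevich.**  A simple graph `G` on `n` vertices with nonincreasing degree
sequence `d 1 ≥ ⋯ ≥ d n` (vertex `i : Fin n` has degree `d (i+1)`) is decomposable iff
there exist nonnegative integers `p, q` with `0 < p + q < n` and
`∑_{i=1}^p d i = p (n - q - 1) + ∑_{i=n-q+1}^n d i`. -/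
theorem isDecomposable_iff_good_pair
    {n : ℕ} (G : SimpleGraph (Fin n)) [DecidableRel G.Adj]
    (d : ℕ → ℕ)
    (hdeg : ∀ i : Fin n, G.degree i = d ((i : ℕ) + 1))
    (hmono : ∀ i j : ℕ, 1 ≤ i → i ≤ j → j ≤ n → d j ≤ d i) :
    G.IsDecomposable ↔
      ∃ p q : ℕ, 0 < p + q ∧ p + q < n ∧
        ∑ i ∈ Finset.Icc 1 p, d i =
          p * (n - q - 1) + ∑ i ∈ Finset.Icc (n - q + 1) n, d i := by
  classical
  constructor
  · rintro ⟨U, H, W, hcover, hUH, hUW, hHW, hUWne, hHne, hclq, hind, hadj, hnadj⟩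
    have hcov : ∀ v : Fin n, v ∈ U ∨ v ∈ H ∨ v ∈ W := by
      intro v
      have hv : v ∈ U ∪ H ∪ W := hcover ▸ Set.mem_univ v
      simpa [Set.mem_union, or_assoc] using hv
    set FU := U.toFinset with hFU
    set FH := H.toFinset with hFHdef
    set FW := W.toFinset with hFWdef
    set p := FU.card with hp
    set q := FW.card with hq
    have hdUH : Disjoint FU FH := Set.disjoint_toFinset.mpr hUH
    have hdUW : Disjoint FU FW := Set.disjoint_toFinset.mpr hUW
    have hdHW : Disjoint FH FW := Set.disjoint_toFinset.mpr hHW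
    have hcovF : FU ∪ FH ∪ FW = Finset.univ := by
      ext v
      simp only [Finset.mem_union, Set.mem_toFinset, Finset.mem_univ, iff_true, hFU, hFHdef,
        hFWdef]
      rcases hcov v with h | h | h
      · exact Or.inl (Or.inl h)
      · exact Or.inl (Or.inr h)
      · exact Or.inr h
    have hcardsum : p + FH.card + q = n := by
      have h1 : (FU ∪ FH ∪ FW).card = n := by rw [hcovF]; simp
      rw [Finset.card_union_of_disjoint (Finset.disjoint_union_left.mpr ⟨hdUW, hdHW⟩),
        Finset.card_union_of_disjoint hdUH] at h1
      omega
    have hHpos : 0 < FH.card := Finset.card_pos.mpr (Set.toFinset_nonempty.mpr hHne)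
    have hlt : p + q < n := by omega
    have hpos : 0 < p + q := by
      obtain ⟨x, hx⟩ := hUWne
      rcases hx with hx | hx
      · have : x ∈ FU := Set.mem_toFinset.mpr hx
        have := Finset.card_pos.mpr ⟨x, this⟩
        omega
      · have : x ∈ FW := Set.mem_toFinset.mpr hx
        have := Finset.card_pos.mpr ⟨x, this⟩
        omega
    refine ⟨p, q, hpos, hlt, ?_⟩
    -- the "claim1" lower bound from the decomposition
    have hWsub : ∀ w ∈ FW, G.neighborFinset w ∩ FU = G.neighborFinset w := by
      intro w hw
      apply Finset.inter_eq_left.mpr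
      intro v hv
      have hadj' : G.Adj w v := (SimpleGraph.mem_neighborFinset G w v).mp hv
      have hwW : w ∈ W := Set.mem_toFinset.mp hw
      rcases hcov v with h | h | h
      · exact Set.mem_toFinset.mpr h
      · exact absurd hadj' (hnadj w hwW v h)
      · exact absurd hadj' (hind w hwW v h)
    have per_u : ∀ u ∈ FU, (n - q - 1) + (G.neighborFinset u ∩ FW).card ≤ G.degree u := by
      intro u hu
      have huU : u ∈ U := Set.mem_toFinset.mp hu
      have hsub : FWᶜ.erase u ⊆ G.neighborFinset u ∩ FWᶜ := by
        intro v hv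
        rcases Finset.mem_erase.mp hv with ⟨hvu, hvW⟩
        refine Finset.mem_inter.mpr ⟨?_, hvW⟩
        rw [SimpleGraph.mem_neighborFinset]
        rcases hcov v with h | h | h
        · exact hclq u huU v h (Ne.symm hvu)
        · exact hadj u huU v h
        · exact absurd (Set.mem_toFinset.mpr h) (Finset.mem_compl.mp hvW)
      have hcard : n - q - 1 ≤ (G.neighborFinset u ∩ FWᶜ).card := by
        have h1 : (FWᶜ.erase u).card = n - q - 1 :=
          card_compl_erase (Finset.disjoint_left.mp hdUW hu)
        calc n - q - 1 = (FWᶜ.erase u).card := h1.symm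
          _ ≤ _ := Finset.card_le_card hsub
      have hds := deg_split G u FW
      omega
    have claim1 : p * (n - q - 1) + ∑ w ∈ FW, G.degree w ≤ ∑ u ∈ FU, G.degree u := by
      have hWdeg : ∑ w ∈ FW, G.degree w = ∑ u ∈ FU, (G.neighborFinset u ∩ FW).card := by
        rw [double_count G FU FW]
        exact Finset.sum_congr rfl fun w hw => by rw [hWsub w hw]; rfl
      calc p * (n - q - 1) + ∑ w ∈ FW, G.degree w
          = ∑ _u ∈ FU, (n - q - 1) + ∑ u ∈ FU, (G.neighborFinset u ∩ FW).card := by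
            rw [hWdeg, Finset.sum_const, smul_eq_mul]
        _ = ∑ u ∈ FU, ((n - q - 1) + (G.neighborFinset u ∩ FW).card) :=
            Finset.sum_add_distrib.symm
        _ ≤ ∑ u ∈ FU, G.degree u := Finset.sum_le_sum per_u
    -- index finsets
    have hpn : p ≤ n := by omega
    have hqn : q ≤ n := by omega
    set S := Finset.univ.filter (fun i : Fin n => (i : ℕ) < p) with hSdef
    set T := Finset.univ.filter (fun i : Fin n => n - q ≤ (i : ℕ)) with hTdef
    have hSc : S.card = p := card_filter_lt hpn
    have hTc : T.card = q := card_filter_ge hqn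
    have hdST : Disjoint S T := by
      rw [Finset.disjoint_left]
      intro i hi hi'
      rw [hSdef, Finset.mem_filter] at hi
      rw [hTdef, Finset.mem_filter] at hi'
      omega
    have tS : ∑ u ∈ S, G.degree u = ∑ i ∈ Icc 1 p, d i := by
      rw [sum_Icc_one]
      rw [show (∑ u ∈ S, G.degree u) = ∑ u ∈ S, (fun k => d (k + 1)) (u : ℕ) from
        Finset.sum_congr rfl fun u _ => hdeg u]
      exact sum_filter_lt (fun k => d (k + 1)) hpn
    have tT : ∑ t ∈ T, G.degree t = ∑ i ∈ Icc (n - q + 1) n, d i := by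
      rw [sum_Icc_top d hqn]
      rw [show (∑ t ∈ T, G.degree t) = ∑ t ∈ T, (fun k => d (k + 1)) (t : ℕ) from
        Finset.sum_congr rfl fun t _ => hdeg t]
      rw [sum_filter_ge (fun k => d (k + 1)) hqn]
    have upper : ∑ i ∈ Icc 1 p, d i ≤ p * (n - q - 1) + ∑ i ∈ Icc (n - q + 1) n, d i := by
      have := main_ineq G S T hdST
      rw [tS, tT, hSc, hTc] at this
      exact this
    have lower : p * (n - q - 1) + ∑ i ∈ Icc (n - q + 1) n, d i ≤ ∑ i ∈ Icc 1 p, d i := by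
      have hB := sum_deg_ge_Icc G hdeg hmono FW
      have hA := sum_deg_le_Icc G hdeg hmono FU
      calc p * (n - q - 1) + ∑ i ∈ Icc (n - q + 1) n, d i
          ≤ p * (n - q - 1) + ∑ w ∈ FW, G.degree w := by
            exact Nat.add_le_add_left hB _
        _ ≤ ∑ u ∈ FU, G.degree u := claim1
        _ ≤ ∑ i ∈ Icc 1 p, d i := hA
    exact le_antisymm upper lower
  · rintro ⟨p, q, hpos, hlt, heq⟩
    have hpn : p ≤ n := by omega
    have hqn : q ≤ n := by omega
    set S := Finset.univ.filter (fun i : Fin n => (i : ℕ) < p) with hSdef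
    set T := Finset.univ.filter (fun i : Fin n => n - q ≤ (i : ℕ)) with hTdef
    have hSc : S.card = p := card_filter_lt hpn
    have hTc : T.card = q := card_filter_ge hqn
    have hdST : Disjoint S T := by
      rw [Finset.disjoint_left]
      intro i hi hi'
      rw [hSdef, Finset.mem_filter] at hi
      rw [hTdef, Finset.mem_filter] at hi'
      omega
    have tS : ∑ u ∈ S, G.degree u = ∑ i ∈ Icc 1 p, d i := by
      rw [sum_Icc_one]
      rw [show (∑ u ∈ S, G.degree u) = ∑ u ∈ S, (fun k => d (k + 1)) (u : ℕ) from
        Finset.sum_congr rfl fun u _ => hdeg u]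
      exact sum_filter_lt (fun k => d (k + 1)) hpn
    have tT : ∑ t ∈ T, G.degree t = ∑ i ∈ Icc (n - q + 1) n, d i := by
      rw [sum_Icc_top d hqn]
      rw [show (∑ t ∈ T, G.degree t) = ∑ t ∈ T, (fun k => d (k + 1)) (t : ℕ) from
        Finset.sum_congr rfl fun t _ => hdeg t]
      rw [sum_filter_ge (fun k => d (k + 1)) hqn]
    have hstar : ∑ u ∈ S, G.degree u = p * (n - q - 1) + ∑ t ∈ T, G.degree t := by
      rw [tS, tT, heq]
    have hsplit : ∑ u ∈ S, G.degree u =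
        ∑ u ∈ S, (G.neighborFinset u ∩ Tᶜ).card + ∑ u ∈ S, (G.neighborFinset u ∩ T).card := by
      rw [← Finset.sum_add_distrib]
      exact Finset.sum_congr rfl fun u _ => deg_split G u T
    have hnotinT : ∀ u ∈ S, u ∉ T := fun u hu => Finset.disjoint_left.mp hdST hu
    have hA1le : ∀ u ∈ S, (G.neighborFinset u ∩ Tᶜ).card ≤ n - q - 1 := by
      intro u hu
      have := nbr_compl_le G u (hnotinT u hu)
      rwa [hTc] at this
    have hA1 : ∑ u ∈ S, (G.neighborFinset u ∩ Tᶜ).card ≤ p * (n - q - 1) := by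
      calc ∑ u ∈ S, (G.neighborFinset u ∩ Tᶜ).card ≤ ∑ _u ∈ S, (n - q - 1) :=
            Finset.sum_le_sum hA1le
        _ = p * (n - q - 1) := by rw [Finset.sum_const, smul_eq_mul, hSc]
    have hDC : ∑ u ∈ S, (G.neighborFinset u ∩ T).card =
        ∑ t ∈ T, (G.neighborFinset t ∩ S).card := double_count G S T
    have hA2le : ∀ t ∈ T, (G.neighborFinset t ∩ S).card ≤ G.degree t :=
      fun t _ => Finset.card_le_card Finset.inter_subset_left
    have hA2 : ∑ t ∈ T, (G.neighborFinset t ∩ S).card ≤ ∑ t ∈ T, G.degree t :=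
      Finset.sum_le_sum hA2le
    have hE1 : ∑ u ∈ S, (G.neighborFinset u ∩ Tᶜ).card = ∑ _u ∈ S, (n - q - 1) := by
      rw [Finset.sum_const, smul_eq_mul, hSc]
      omega
    have hE2 : ∑ t ∈ T, (G.neighborFinset t ∩ S).card = ∑ t ∈ T, G.degree t := by
      omega
    have hE1' : ∀ u ∈ S, (G.neighborFinset u ∩ Tᶜ).card = n - q - 1 :=
      (Finset.sum_eq_sum_iff_of_le hA1le).mp hE1
    have hE2' : ∀ t ∈ T, (G.neighborFinset t ∩ S).card = G.degree t :=
      (Finset.sum_eq_sum_iff_of_le hA2le).mp hE2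
    -- adjacency consequences
    have hadjS : ∀ u ∈ S, ∀ v : Fin n, v ∉ T → v ≠ u → G.Adj u v := by
      intro u hu v hvT hvu
      have hset : G.neighborFinset u ∩ Tᶜ = Tᶜ.erase u := by
        apply Finset.eq_of_subset_of_card_le (nbr_compl_subset G u T)
        rw [card_compl_erase (hnotinT u hu), hE1' u hu, hTc]
      have hvmem : v ∈ Tᶜ.erase u :=
        Finset.mem_erase.mpr ⟨hvu, Finset.mem_compl.mpr hvT⟩
      rw [← hset] at hvmem
      exact (SimpleGraph.mem_neighborFinset G u v).mp (Finset.mem_inter.mp hvmem).1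
    have hTnbr : ∀ t ∈ T, G.neighborFinset t ⊆ S := by
      intro t ht
      have hset : G.neighborFinset t ∩ S = G.neighborFinset t := by
        apply Finset.eq_of_subset_of_card_le Finset.inter_subset_left
        rw [hE2' t ht]
        exact le_rfl
      rw [← hset]
      exact Finset.inter_subset_right
    -- build the decomposition
    refine ⟨{i : Fin n | (i : ℕ) < p}, {i : Fin n | p ≤ (i : ℕ) ∧ (i : ℕ) < n - q},
      {i : Fin n | n - q ≤ (i : ℕ)}, ?_, ?_, ?_, ?_, ?_, ?_, ?_, ?_, ?_, ?_⟩
    · apply Set.eq_univ_iff_forall.mpr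
      intro v
      simp only [Set.mem_union, Set.mem_setOf_eq]
      omega
    · rw [Set.disjoint_left]; intro a ha ha'; simp only [Set.mem_setOf_eq] at ha ha'; omega
    · rw [Set.disjoint_left]; intro a ha ha'; simp only [Set.mem_setOf_eq] at ha ha'; omega
    · rw [Set.disjoint_left]; intro a ha ha'; simp only [Set.mem_setOf_eq] at ha ha'; omega
    · by_cases hp0 : 0 < p
      · exact ⟨⟨0, by omega⟩, Or.inl (by simp only [Set.mem_setOf_eq]; simpa using hp0)⟩
      · refine ⟨⟨n - 1, by omega⟩, Or.inr ?_⟩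
        simp only [Set.mem_setOf_eq]
        omega
    · exact ⟨⟨p, by omega⟩, by simp only [Set.mem_setOf_eq]; omega⟩
    · intro u hu v hv hne
      simp only [Set.mem_setOf_eq] at hu hv
      have huS : u ∈ S := by rw [hSdef, Finset.mem_filter]; exact ⟨Finset.mem_univ _, hu⟩
      have hvT : v ∉ T := by rw [hTdef, Finset.mem_filter]; push_neg; intro _; omega
      exact hadjS u huS v hvT (Ne.symm hne)
    · intro w hw w' hw' hadj
      simp only [Set.mem_setOf_eq] at hw hw'
      have hwT : w ∈ T := by rw [hTdef, Finset.mem_filter]; exact ⟨Finset.mem_univ _, hw⟩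
      have hmem : w' ∈ S := hTnbr w hwT ((SimpleGraph.mem_neighborFinset G w w').mpr hadj)
      rw [hSdef, Finset.mem_filter] at hmem
      omega
    · intro u hu h hh
      simp only [Set.mem_setOf_eq] at hu hh
      have huS : u ∈ S := by rw [hSdef, Finset.mem_filter]; exact ⟨Finset.mem_univ _, hu⟩
      have hhT : h ∉ T := by rw [hTdef, Finset.mem_filter]; push_neg; intro _; omega
      have hne : h ≠ u := by
        intro hcontra
        rw [hcontra] at hh
        omega
      exact hadjS u huS h hhT hne
    · intro w hw h hh hadj
      simp only [Set.mem_setOf_eq] at hw hh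
      have hwT : w ∈ T := by rw [hTdef, Finset.mem_filter]; exact ⟨Finset.mem_univ _, hw⟩
      have hmem : h ∈ S := hTnbr w hwT ((SimpleGraph.mem_neighborFinset G w h).mpr hadj)
      rw [hSdef, Finset.mem_filter] at hmem
      omega
end

section
/- Let G be a simple graph with vertices v₁, …, vₙ such that deg(v_i) = d_i and d₁ ≥ d₂ ≥ … ≥ dₙ. Suppose p, q are nonnegative integers with 0 < p + q < n and Σ_{i=1}^{p} d_i = p(n − q − 1) + Σ_{i=n−q+1}^{n} d_i. Then, setting U = {v₁, …, v_p}, H = {v_{p+1}, …, v_{n−q}} and W = {v_{n−q+1}, …, vₙ}: U induces a clique in G, every vertex of U is adjacent to every vertex of H, W induces an independent set in G, and no vertex of W is adjacent to any vertex of H. -/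
/-- Cardinality of the initial segment of `Fin n`. -/
lemma card_filter_val_lt {n : ℕ} (m : ℕ) (hm : m ≤ n) :
    (Finset.univ.filter fun i : Fin n => (i:ℕ) < m).card = m := by
  apply Finset.card_eq_of_bijective (fun i hi => (⟨i, lt_of_lt_of_le hi hm⟩ : Fin n))
  · intro a ha
    simp only [Finset.mem_filter, Finset.mem_univ, true_and] at ha
    exact ⟨a, ha, rfl⟩
  · intro i hi; simp [hi]
  · intro i j hi hj h; simpa using congrArg Fin.val h

/-- **Tyshkevich.** Let `G` be a simple graph on vertices `v₁, …, vₙ` (vertex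
`i : Fin n` playing the role of `v_{i+1}`) with `deg v_i = d i` and
`d 1 ≥ d 2 ≥ ⋯ ≥ d n`.  If `p, q` form a *good pair*, i.e. `0 < p + q < n` and
`∑_{i=1}^p d i = p (n - q - 1) + ∑_{i=n-q+1}^n d i`, then setting
`U = {v₁, …, v_p}`, `H = {v_{p+1}, …, v_{n-q}}`, `W = {v_{n-q+1}, …, vₙ}`:
`U` induces a clique, every vertex of `U` is adjacent to every vertex of `H`,
`W` induces an independent set, and no vertex of `W` is adjacent to any vertex of `H`. -/
theorem good_pair_decomposition
    {n : ℕ} (G : SimpleGraph (Fin n)) [DecidableRel G.Adj]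
    (d : ℕ → ℕ)
    (hdeg : ∀ i : Fin n, G.degree i = d ((i : ℕ) + 1))
    (hmono : ∀ i j : ℕ, 1 ≤ i → i ≤ j → j ≤ n → d j ≤ d i)
    (p q : ℕ) (hpq0 : 0 < p + q) (hpqn : p + q < n)
    (hgood : ∑ i ∈ Finset.Icc 1 p, d i =
      p * (n - q - 1) + ∑ i ∈ Finset.Icc (n - q + 1) n, d i) :
    (∀ i j : Fin n, (i : ℕ) < p → (j : ℕ) < p → i ≠ j → G.Adj i j) ∧
    (∀ i j : Fin n, (i : ℕ) < p → p ≤ (j : ℕ) → (j : ℕ) < n - q → G.Adj i j) ∧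
    (∀ i j : Fin n, n - q ≤ (i : ℕ) → n - q ≤ (j : ℕ) → ¬ G.Adj i j) ∧
    (∀ i j : Fin n, n - q ≤ (i : ℕ) → p ≤ (j : ℕ) → (j : ℕ) < n - q → ¬ G.Adj i j) := by
  classical
  have hpn : p < n := by omega
  have hpnq : p < n - q := by omega
  set U : Finset (Fin n) := Finset.univ.filter (fun i => (i:ℕ) < p) with hUdef
  set W : Finset (Fin n) := Finset.univ.filter (fun i => n - q ≤ (i:ℕ)) with hWdef
  set F : Finset (Fin n) := Finset.univ.filter (fun i => (i:ℕ) < n - q) with hFdef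
  have hUcard : U.card = p := card_filter_val_lt p hpn.le
  have hFcard : F.card = n - q := card_filter_val_lt (n - q) (by omega)
  -- translate the two `d`-sums into degree sums
  have hSU : ∑ u ∈ U, G.degree u = ∑ i ∈ Finset.Icc 1 p, d i := by
    apply Finset.sum_bij (fun (a : Fin n) (_ : a ∈ U) => (a : ℕ) + 1)
    · intro a ha
      simp only [hUdef, Finset.mem_filter, Finset.mem_univ, true_and] at ha
      simp only [Finset.mem_Icc]; omega
    · intro a ha b hb h
      exact Fin.ext (by omega)
    · intro b hb
      simp only [Finset.mem_Icc] at hb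
      refine ⟨⟨b - 1, by omega⟩, ?_, by simp; omega⟩
      simp only [hUdef, Finset.mem_filter, Finset.mem_univ, true_and]
      show b - 1 < p
      omega
    · intro a ha; exact hdeg a
  have hSW : ∑ w ∈ W, G.degree w = ∑ i ∈ Finset.Icc (n - q + 1) n, d i := by
    apply Finset.sum_bij (fun (a : Fin n) (_ : a ∈ W) => (a : ℕ) + 1)
    · intro a ha
      simp only [hWdef, Finset.mem_filter, Finset.mem_univ, true_and] at ha
      have := a.isLt
      simp only [Finset.mem_Icc]; omega
    · intro a ha b hb h
      exact Fin.ext (by omega)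
    · intro b hb
      simp only [Finset.mem_Icc] at hb
      refine ⟨⟨b - 1, by omega⟩, ?_, by simp; omega⟩
      simp only [hWdef, Finset.mem_filter, Finset.mem_univ, true_and]
      show n - q ≤ b - 1
      omega
    · intro a ha; exact hdeg a
  -- intersection cardinalities as indicator sums
  have hcap : ∀ (s : Finset (Fin n)) (v : Fin n),
      (G.neighborFinset v ∩ s).card = ∑ w ∈ s, if G.Adj v w then 1 else 0 := by
    intro s v
    rw [Finset.inter_comm, ← Finset.filter_mem_eq_inter, Finset.card_filter]
    refine Finset.sum_congr rfl (fun w _ => ?_)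
    simp [SimpleGraph.mem_neighborFinset]
  -- double counting of edges between U and W
  have hBB' : ∑ u ∈ U, (G.neighborFinset u ∩ W).card
      = ∑ w ∈ W, (G.neighborFinset w ∩ U).card := by
    simp only [hcap]
    rw [Finset.sum_comm]
    refine Finset.sum_congr rfl fun w _ => Finset.sum_congr rfl fun u _ => ?_
    simp [G.adj_comm]
  -- the split of each degree
  have hsplit : ∀ u : Fin n,
      (G.neighborFinset u \ W).card + (G.neighborFinset u ∩ W).card = G.degree u := by
    intro u
    rw [Finset.card_sdiff_add_card_inter, SimpleGraph.card_neighborFinset_eq_degree]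
  -- bound for vertices of U: neighbours outside W number at most n - q - 1
  have hsubT : ∀ u : Fin n, (u : ℕ) < n - q → G.neighborFinset u \ W ⊆ F \ {u} := by
    intro u hu x hx
    simp only [Finset.mem_sdiff, SimpleGraph.mem_neighborFinset, hWdef, Finset.mem_filter,
      Finset.mem_univ, true_and, not_le] at hx
    simp only [Finset.mem_sdiff, hFdef, Finset.mem_filter, Finset.mem_univ, true_and,
      Finset.mem_singleton]
    exact ⟨hx.2, fun h => G.ne_of_adj hx.1.symm (h ▸ rfl)⟩
  have hTcard : ∀ u : Fin n, (u : ℕ) < n - q → (F \ {u}).card = n - q - 1 := by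
    intro u hu
    rw [Finset.card_sdiff_of_subset (by
      simp only [Finset.singleton_subset_iff, hFdef, Finset.mem_filter, Finset.mem_univ,
        true_and]
      exact hu)]
    simp [hFcard]
  have hAle : ∀ u ∈ U, (G.neighborFinset u \ W).card ≤ n - q - 1 := by
    intro u hu
    simp only [hUdef, Finset.mem_filter, Finset.mem_univ, true_and] at hu
    calc (G.neighborFinset u \ W).card ≤ (F \ {u}).card :=
          Finset.card_le_card (hsubT u (by omega))
      _ = n - q - 1 := hTcard u (by omega)
  have hB'le : ∀ w ∈ W, (G.neighborFinset w ∩ U).card ≤ G.degree w := by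
    intro w _
    rw [← SimpleGraph.card_neighborFinset_eq_degree]
    exact Finset.card_le_card Finset.inter_subset_left
  -- the main equality chain
  have hmain : ∑ u ∈ U, (G.neighborFinset u \ W).card + ∑ w ∈ W, (G.neighborFinset w ∩ U).card
      = p * (n - q - 1) + ∑ w ∈ W, G.degree w := by
    rw [← hBB', ← Finset.sum_add_distrib]
    calc ∑ u ∈ U, ((G.neighborFinset u \ W).card + (G.neighborFinset u ∩ W).card)
        = ∑ u ∈ U, G.degree u := Finset.sum_congr rfl fun u _ => hsplit u
      _ = p * (n - q - 1) + ∑ w ∈ W, G.degree w := by rw [hSU, hgood, hSW]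
  have hA : ∑ u ∈ U, (G.neighborFinset u \ W).card = p * (n - q - 1) := by
    have h1 : ∑ u ∈ U, (G.neighborFinset u \ W).card ≤ p * (n - q - 1) := by
      calc ∑ u ∈ U, (G.neighborFinset u \ W).card ≤ ∑ u ∈ U, (n - q - 1) :=
            Finset.sum_le_sum hAle
        _ = p * (n - q - 1) := by rw [Finset.sum_const, hUcard, smul_eq_mul]
    have h2 : ∑ w ∈ W, (G.neighborFinset w ∩ U).card ≤ ∑ w ∈ W, G.degree w :=
      Finset.sum_le_sum hB'le
    omega
  have hB' : ∑ w ∈ W, (G.neighborFinset w ∩ U).card = ∑ w ∈ W, G.degree w := by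
    have h1 : ∑ u ∈ U, (G.neighborFinset u \ W).card ≤ ∑ u ∈ U, (n - q - 1) :=
      Finset.sum_le_sum hAle
    rw [Finset.sum_const, hUcard, smul_eq_mul] at h1
    have h2 : ∑ w ∈ W, (G.neighborFinset w ∩ U).card ≤ ∑ w ∈ W, G.degree w :=
      Finset.sum_le_sum hB'le
    omega
  -- termwise equalities
  have hAeq : ∀ u ∈ U, (G.neighborFinset u \ W).card = n - q - 1 := by
    have := (Finset.sum_eq_sum_iff_of_le hAle).mp (by
      rw [hA, Finset.sum_const, hUcard, smul_eq_mul])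
    exact this
  have hWnbr : ∀ w ∈ W, G.neighborFinset w ⊆ U := by
    intro w hw
    have heq : ∀ w ∈ W, (G.neighborFinset w ∩ U).card = G.degree w :=
      (Finset.sum_eq_sum_iff_of_le hB'le).mp hB'
    have hc : (G.neighborFinset w ∩ U).card = (G.neighborFinset w).card := by
      rw [heq w hw, SimpleGraph.card_neighborFinset_eq_degree]
    have := Finset.eq_of_subset_of_card_le Finset.inter_subset_left hc.ge
    intro x hx
    have hx' : x ∈ G.neighborFinset w ∩ U := by rw [this]; exact hx
    exact (Finset.mem_inter.mp hx').2
  -- adjacency from U to everything outside W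
  have hUadj : ∀ i j : Fin n, (i : ℕ) < p → (j : ℕ) < n - q → i ≠ j → G.Adj i j := by
    intro i j hi hj hij
    have hiU : i ∈ U := by
      simp only [hUdef, Finset.mem_filter, Finset.mem_univ, true_and]; exact hi
    have hceq : (G.neighborFinset i \ W).card = n - q - 1 := hAeq i hiU
    have heq : G.neighborFinset i \ W = F \ {i} :=
      Finset.eq_of_subset_of_card_le (hsubT i (by omega))
        (by rw [hceq, hTcard i (by omega)])
    have hjmem : j ∈ F \ {i} := by
      simp only [Finset.mem_sdiff, hFdef, Finset.mem_filter, Finset.mem_univ, true_and,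
        Finset.mem_singleton]
      exact ⟨hj, fun h => hij h.symm⟩
    rw [← heq] at hjmem
    exact (SimpleGraph.mem_neighborFinset G i j).mp (Finset.mem_sdiff.mp hjmem).1
  refine ⟨fun i j hi hj hij => hUadj i j hi (by omega) hij,
    fun i j hi hjp hj => hUadj i j hi hj (by intro h; omega),
    fun i j hi hj hadj => ?_, fun i j hi hjp hj hadj => ?_⟩
  · have hiW : i ∈ W := by
      simp only [hWdef, Finset.mem_filter, Finset.mem_univ, true_and]; exact hi
    have := hWnbr i hiW ((SimpleGraph.mem_neighborFinset G i j).mpr hadj)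
    simp only [hUdef, Finset.mem_filter, Finset.mem_univ, true_and] at this
    omega
  · have hiW : i ∈ W := by
      simp only [hWdef, Finset.mem_filter, Finset.mem_univ, true_and]; exact hi
    have := hWnbr i hiW ((SimpleGraph.mem_neighborFinset G i j).mpr hadj)
    simp only [hUdef, Finset.mem_filter, Finset.mem_univ, true_and] at this
    omega
end

section
/- Let S be a split graph on vertex set A with designated partition ⟨U, W⟩ (U inducing a clique, W an independent set), let H be a simple graph on a vertex set B disjoint from A, and let K = S ∘ H be the composition, i.e., the graph on A ∪ B with edge set E(S) ∪ E(H) ∪ {uv : u ∈ U, v ∈ B}. If a, b, c, d are four distinct vertices of K with ac, bd ∈ E(K) and bc, ad ∉ E(K) (a swap configuration), then either all four of a, b, c, d lie in A = U ∪ W, or all four lie in B. -/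
/-- The Tyshkevich composition `S ∘ H` of a split graph `S` on `α` with designated
clique side `U` and a simple graph `H` on `β`: it lives on `α ⊕ β`, keeps the edges of
`S` and of `H`, and joins every vertex of `U` to every vertex of `β`. -/
def tyshkevichComp {α β : Type*} (S : SimpleGraph α) (H : SimpleGraph β)
    (U : Set α) : SimpleGraph (α ⊕ β) where
  Adj x y :=
    match x, y with
    | Sum.inl a, Sum.inl a' => S.Adj a a'
    | Sum.inl a, Sum.inr _ => a ∈ U
    | Sum.inr _, Sum.inl a => a ∈ U
    | Sum.inr b, Sum.inr b' => H.Adj b b'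
  symm := by
    constructor
    intro x y h
    cases x <;> cases y <;> simp_all <;> exact h.symm
  loopless := by
    constructor
    intro x h
    cases x <;> simp_all

/-- **Barrus–West (swap locality).**  Let `S` be a split graph on `α` with designated
partition `⟨U, Uᶜ⟩` (`U` a clique, `Uᶜ` independent), `H` a simple graph on `β`, and
`K = S ∘ H` their composition.  If `a, b, c, d` are four distinct vertices of `K` with
`ac, bd ∈ E(K)` and `bc, ad ∉ E(K)` (a swap configuration), then either all four lie
in `α` or all four lie in `β`. -/
theorem swap_within_one_component
    {α β : Type*} (S : SimpleGraph α) (H : SimpleGraph β) (U : Set α)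
    (hclique : ∀ u ∈ U, ∀ v ∈ U, u ≠ v → S.Adj u v)
    (hindep : ∀ u ∉ U, ∀ v ∉ U, ¬ S.Adj u v)
    (a b c d : α ⊕ β)
    (hab : a ≠ b) (hac : a ≠ c) (had : a ≠ d)
    (hbc : b ≠ c) (hbd : b ≠ d) (hcd : c ≠ d)
    (e1 : (tyshkevichComp S H U).Adj a c) (e2 : (tyshkevichComp S H U).Adj b d)
    (ne1 : ¬ (tyshkevichComp S H U).Adj b c) (ne2 : ¬ (tyshkevichComp S H U).Adj a d) :
    (a.isLeft ∧ b.isLeft ∧ c.isLeft ∧ d.isLeft) ∨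
    (a.isRight ∧ b.isRight ∧ c.isRight ∧ d.isRight) := by
  rcases a with x|x <;> rcases b with y|y <;> rcases c with z|z <;> rcases d with w|w <;>
    simp_all [tyshkevichComp] <;>
    first
      | exact ne2 (hclique _ e1 _ e2 (by simp_all))
      | exact ne1 (hclique _ e2 _ e1 (by simp_all))
      | exact hindep _ ne1 _ ne2 e2
      | exact hindep _ ne2 _ ne1 e1
      | exact ne1 (hclique _ e2 _ (by by_contra h; exact hindep _ ne2 _ h e1) hbc)
      | exact ne2 (hclique _ e1 _ (by by_contra h; exact hindep _ ne1 _ h e2) had)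
      | exact ne2 (hclique _ (by by_contra h; exact hindep _ h _ ne1 e1) _ e2 had)
      | exact ne1 (hclique _ (by by_contra h; exact hindep _ h _ ne2 e2) _ e1 hbc)
end

section
/- Let S be a split graph on a finite vertex set A with designated partition ⟨U, W⟩ (U inducing a clique, W an independent set), and let H be a simple graph on a finite vertex set B disjoint from A. Define d : A ∪ B → ℕ by d(u) = deg_S(u) + |B| for u ∈ U, d(w) = deg_S(w) for w ∈ W, and d(x) = deg_H(x) + |U| for x ∈ B (this is the degree function of the composition S ∘ H). Then the realization graph 𝔾(d) over vertex set A ∪ B is isomorphic (as a simple graph) to the Cartesian (box) product 𝔾(deg_S) □ 𝔾(deg_H), where 𝔾(deg_S) and 𝔾(deg_H) are the realization graphs over the vertex sets A and B respectively. -/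
open Sym2

attribute [local instance] Classical.propDecidable

/-- `IsSwap G G'` holds when `G'` is obtained from `G` by a single swap: there are four
distinct vertices `a, b, c, d` with `ac, bd` edges of `G` and `bc, ad` non-edges of `G`,
and `G'` arises from `G` by replacing the edges `ac, bd` with `bc, ad`. -/
def IsSwap {V : Type*} (G G' : SimpleGraph V) : Prop :=
  ∃ a b c d : V, a ≠ b ∧ a ≠ c ∧ a ≠ d ∧ b ≠ c ∧ b ≠ d ∧ c ≠ d ∧
    G.Adj a c ∧ G.Adj b d ∧ ¬ G.Adj b c ∧ ¬ G.Adj a d ∧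
    G'.edgeSet = (G.edgeSet \ {s(a, c), s(b, d)}) ∪ {s(b, c), s(a, d)}

/-- The realization graph `𝔾(d)` of a degree function `d : V → ℕ`: its vertices are
the simple graphs on `V` with degree function `d`, two of them being adjacent iff
they differ and one is obtained from the other by a single swap. -/
def realizationGraph {V : Type*} [Fintype V] (d : V → ℕ) :
    SimpleGraph {G : SimpleGraph V // ∀ v, G.degree v = d v} :=
  SimpleGraph.fromRel (fun G G' => IsSwap G.1 G'.1)

set_option linter.unusedSectionVars false
open Sum Finset SimpleGraph

lemma isSwap_iff_adj {V : Type*} {G G' : SimpleGraph V} :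
    IsSwap G G' ↔ ∃ a b c d : V, a ≠ b ∧ a ≠ c ∧ a ≠ d ∧ b ≠ c ∧ b ≠ d ∧ c ≠ d ∧
      G.Adj a c ∧ G.Adj b d ∧ ¬ G.Adj b c ∧ ¬ G.Adj a d ∧
      ∀ x y, G'.Adj x y ↔
        ((G.Adj x y ∧ ¬(s(x, y) = s(a, c) ∨ s(x, y) = s(b, d))) ∨
          (s(x, y) = s(b, c) ∨ s(x, y) = s(a, d))) := by
  have key : ∀ a b c d : V,
      (G'.edgeSet = (G.edgeSet \ {s(a, c), s(b, d)}) ∪ {s(b, c), s(a, d)}) ↔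
      ∀ x y, G'.Adj x y ↔
        ((G.Adj x y ∧ ¬(s(x, y) = s(a, c) ∨ s(x, y) = s(b, d))) ∨
          (s(x, y) = s(b, c) ∨ s(x, y) = s(a, d))) := by
    intro a b c dd
    rw [Set.ext_iff, Sym2.forall]
    apply forall₂_congr
    intro x y
    simp only [Set.mem_union, Set.mem_diff, Set.mem_insert_iff, Set.mem_singleton_iff,
      SimpleGraph.mem_edgeSet]
  unfold IsSwap
  constructor <;> rintro ⟨a, b, c, dd, h1, h2, h3, h4, h5, h6, h7, h8, h9, h10, hE⟩
  · exact ⟨a, b, c, dd, h1, h2, h3, h4, h5, h6, h7, h8, h9, h10, (key a b c dd).mp hE⟩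
  · exact ⟨a, b, c, dd, h1, h2, h3, h4, h5, h6, h7, h8, h9, h10, (key a b c dd).mpr hE⟩

lemma isSwap_ne {V : Type*} {G G' : SimpleGraph V} (h : IsSwap G G') : G ≠ G' := by
  rw [isSwap_iff_adj] at h
  obtain ⟨a, b, c, dd, -, -, -, -, -, -, -, -, -, h10, hch⟩ := h
  intro he
  subst he
  exact h10 ((hch a dd).mpr (Or.inr (Or.inr rfl)))



section Aux
variable {α β : Type*} [Fintype α] [Fintype β] [DecidableEq α]

/-- The Tyshkevich composition of a split graph (with clique part `U`) and a graph. -/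
def BarrusComp (U : Finset α) (P : SimpleGraph α) (Q : SimpleGraph β) :
    SimpleGraph (α ⊕ β) where
  Adj v w := match v, w with
    | inl a, inl b => P.Adj a b
    | inl a, inr _ => a ∈ U
    | inr _, inl b => b ∈ U
    | inr x, inr y => Q.Adj x y
  symm := by
    refine ⟨?_⟩; rintro (a|x) (b|y) h
    · exact h.symm
    · exact h
    · exact h
    · exact h.symm
  loopless := by
    refine ⟨?_⟩; rintro (a|x) h
    exacts [P.loopless.irrefl a h, Q.loopless.irrefl x h]

lemma barrusComp_adj_ll (U : Finset α) (P : SimpleGraph α) (Q : SimpleGraph β) (a b : α) :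
    (BarrusComp U P Q).Adj (inl a) (inl b) ↔ P.Adj a b := Iff.rfl
lemma barrusComp_adj_rr (U : Finset α) (P : SimpleGraph α) (Q : SimpleGraph β) (x y : β) :
    (BarrusComp U P Q).Adj (inr x) (inr y) ↔ Q.Adj x y := Iff.rfl
lemma barrusComp_adj_lr (U : Finset α) (P : SimpleGraph α) (Q : SimpleGraph β) (a : α) (x : β) :
    (BarrusComp U P Q).Adj (inl a) (inr x) ↔ a ∈ U := Iff.rfl

lemma degree_eq_sum {V : Type*} [Fintype V] (G : SimpleGraph V) (v : V) :
    G.degree v = ∑ w, if G.Adj v w then 1 else 0 := by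
  classical
  show (G.neighborFinset v).card = _
  rw [neighborFinset_eq_filter, Finset.card_filter]

lemma degree_eq_card_filter {V : Type*} [Fintype V] (G : SimpleGraph V) (v : V) :
    G.degree v = #(univ.filter (G.Adj v)) := by
  classical
  show (G.neighborFinset v).card = _
  rw [neighborFinset_eq_filter]

lemma sum_card_filter_adj_comm {V : Type*} (G : SimpleGraph V) (s t : Finset V) :
    ∑ v ∈ s, #(t.filter (G.Adj v)) = ∑ w ∈ t, #(s.filter (G.Adj w)) := by
  classical
  simp only [Finset.card_filter]
  rw [Finset.sum_comm]
  congr 1; ext w; congr 1; ext v; rw [G.adj_comm]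

lemma degree_filter_split {V : Type*} [Fintype V] [DecidableEq V] (G : SimpleGraph V)
    (K : Finset V) (v : V) :
    G.degree v = #(K.filter (G.Adj v)) + #(Kᶜ.filter (G.Adj v)) := by
  classical
  rw [degree_eq_card_filter, ← Finset.card_union_of_disjoint
      (Finset.disjoint_filter_filter disjoint_compl_right), ← Finset.filter_union,
      Finset.union_compl]

lemma degree_sum_decomp (G : SimpleGraph (α ⊕ β)) (v : α ⊕ β) :
    G.degree v = (∑ a, if G.Adj v (inl a) then 1 else 0)
      + (∑ x, if G.Adj v (inr x) then 1 else 0) := by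
  rw [degree_eq_sum, Fintype.sum_sum_type]

lemma comap_inl_degree (G : SimpleGraph (α ⊕ β)) (a : α) :
    (G.comap inl).degree a = ∑ b, if G.Adj (inl a) (inl b) then 1 else 0 := by
  convert degree_eq_sum (G.comap inl) a using 1 <;> congr!

lemma comap_inr_degree (G : SimpleGraph (α ⊕ β)) (x : β) :
    (G.comap inr).degree x = ∑ y, if G.Adj (inr x) (inr y) then 1 else 0 := by
  convert degree_eq_sum (G.comap inr) x using 1 <;> congr!

lemma barrusComp_degree_inl (U : Finset α) (P : SimpleGraph α) (Q : SimpleGraph β) (a : α) :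
    (BarrusComp U P Q).degree (inl a)
      = P.degree a + (if a ∈ U then Fintype.card β else 0) := by
  rw [degree_sum_decomp]
  congr 1
  · rw [degree_eq_sum]; exact Finset.sum_congr rfl fun b _ => by simp only [barrusComp_adj_ll]
  · simp only [barrusComp_adj_lr]
    by_cases h : a ∈ U <;> simp [h]

lemma barrusComp_degree_inr (U : Finset α) (P : SimpleGraph α) (Q : SimpleGraph β) (x : β) :
    (BarrusComp U P Q).degree (inr x) = Q.degree x + U.card := by
  rw [degree_sum_decomp, add_comm]
  congr 1
  · rw [degree_eq_sum]; exact Finset.sum_congr rfl fun y _ => by simp only [barrusComp_adj_rr]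
  · have : ∀ a : α, (BarrusComp U P Q).Adj (inr x) (inl a) ↔ a ∈ U := fun a => Iff.rfl
    simp only [this]
    rw [← Finset.card_filter]
    congr 1
    ext a; simp


variable (S : SimpleGraph α) (U : Finset α)

lemma split_degree_eq (hindep : ∀ u ∉ U, ∀ v ∉ U, ¬ S.Adj u v) {w : α} (hw : w ∉ U) :
    S.degree w = #(U.filter (S.Adj w)) := by
  rw [degree_eq_card_filter]
  congr 1
  ext v
  simp only [mem_filter, mem_univ, true_and]
  constructor
  · intro hv
    refine ⟨by_contra fun h => hindep w hw v h hv, hv⟩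
  · rintro ⟨_, h⟩; exact h

lemma split_degree_le (hindep : ∀ u ∉ U, ∀ v ∉ U, ¬ S.Adj u v) {w : α} (hw : w ∉ U) :
    S.degree w ≤ #U := by
  rw [split_degree_eq S U hindep hw]
  exact Finset.card_filter_le _ _

lemma split_sum (hclique : ∀ u ∈ U, ∀ v ∈ U, u ≠ v → S.Adj u v)
    (hindep : ∀ u ∉ U, ∀ v ∉ U, ¬ S.Adj u v) :
    ∑ u ∈ U, S.degree u = #U * (#U - 1) + ∑ w ∈ Uᶜ, S.degree w := by
  have h2 : ∀ u ∈ U, U.filter (S.Adj u) = U.erase u := by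
    intro u hu; ext v
    simp only [mem_filter, mem_erase]
    constructor
    · rintro ⟨hv, ha⟩; exact ⟨ha.ne.symm, hv⟩
    · rintro ⟨hne, hv⟩; exact ⟨hv, hclique u hu v hv (Ne.symm hne)⟩
  have h1 : ∀ u ∈ U, S.degree u = (#U - 1) + #(Uᶜ.filter (S.Adj u)) := by
    intro u hu
    rw [degree_filter_split S U u, h2 u hu, Finset.card_erase_of_mem hu]
  rw [Finset.sum_congr rfl h1, Finset.sum_add_distrib, Finset.sum_const, smul_eq_mul,
    sum_card_filter_adj_comm]
  congr 1
  refine Finset.sum_congr rfl fun w hw => ?_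
  rw [← split_degree_eq S U hindep (Finset.mem_compl.mp hw)]

variable (H : SimpleGraph β) (d : α ⊕ β → ℕ)

lemma realization_structure
    (hclique : ∀ u ∈ U, ∀ v ∈ U, u ≠ v → S.Adj u v)
    (hindep : ∀ u ∉ U, ∀ v ∉ U, ¬ S.Adj u v)
    (hdU : ∀ u ∈ U, d (Sum.inl u) = S.degree u + Fintype.card β)
    (hdW : ∀ w ∉ U, d (Sum.inl w) = S.degree w)
    (hdB : ∀ x : β, d (Sum.inr x) = H.degree x + U.card)
    (G : SimpleGraph (α ⊕ β)) (hG : ∀ v, G.degree v = d v) :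
    (∀ a x, G.Adj (inl a) (inr x) ↔ a ∈ U) ∧
    (∀ u ∈ U, ∀ v ∈ U, u ≠ v → G.Adj (inl u) (inl v)) ∧
    (∀ w ∉ U, ∀ w' ∉ U, ¬ G.Adj (inl w) (inl w')) := by
  classical
  set k := #U with hk
  set m := Fintype.card β with hm
  set K : Finset (α ⊕ β) := U.image inl with hKdef
  have hKcard : #K = k := Finset.card_image_of_injective _ Sum.inl_injective
  have hinlK : ∀ a : α, inl a ∈ K ↔ a ∈ U := by intro a; simp [hKdef]
  have hinrK : ∀ x : β, inr x ∉ K := by intro x; simp [hKdef]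
  -- bounds
  have hsub : ∀ v ∈ K, K.filter (G.Adj v) ⊆ K.erase v := by
    intro v hv w hw
    rw [Finset.mem_erase]
    rw [Finset.mem_filter] at hw
    exact ⟨hw.2.ne.symm, hw.1⟩
  have h1 : ∀ v ∈ K, #(K.filter (G.Adj v)) ≤ k - 1 := by
    intro v hv
    calc #(K.filter (G.Adj v)) ≤ #(K.erase v) := Finset.card_le_card (hsub v hv)
    _ = k - 1 := by rw [Finset.card_erase_of_mem hv, hKcard]
  have h2 : ∀ w ∈ Kᶜ, #(K.filter (G.Adj w)) ≤ min (G.degree w) k := by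
    intro w hw
    refine le_min ?_ ?_
    · rw [degree_filter_split G K w]; exact Nat.le_add_right _ _
    · exact (Finset.card_filter_le _ _).trans hKcard.le
  have hWdeg : ∀ w ∉ U, S.degree w ≤ k := fun w hw => split_degree_le S U hindep hw
  -- total sum over K
  have hsum : ∑ v ∈ K, G.degree v
      = ∑ v ∈ K, #(K.filter (G.Adj v)) + ∑ w ∈ Kᶜ, #(K.filter (G.Adj w)) := by
    rw [← sum_card_filter_adj_comm G K Kᶜ, ← Finset.sum_add_distrib]
    exact Finset.sum_congr rfl fun v _ => degree_filter_split G K v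
  have hLHS : ∑ v ∈ K, G.degree v = k * (k - 1) + (∑ w ∈ Uᶜ, S.degree w + m * k) := by
    rw [hKdef, Finset.sum_image (fun a _ b _ h => Sum.inl_injective h)]
    have : ∀ u ∈ U, G.degree (inl u) = S.degree u + m := by
      intro u hu; rw [hG, hdU u hu]
    rw [Finset.sum_congr rfl this, Finset.sum_add_distrib, Finset.sum_const, smul_eq_mul,
      split_sum S U hclique hindep]
    ring
  have hKc : Kᶜ = (Uᶜ.image inl) ∪ (univ.image inr) := by
    ext v
    rcases v with a | x <;> simp [hKdef]
  have hdisj : Disjoint ((Uᶜ.image inl) : Finset (α ⊕ β)) (univ.image inr) := by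
    rw [Finset.disjoint_left]
    rintro v hv hv'
    simp only [Finset.mem_image] at hv hv'
    obtain ⟨a, -, rfl⟩ := hv
    obtain ⟨x, -, h⟩ := hv'
    exact Sum.inr_ne_inl h
  have hmin : ∑ w ∈ Kᶜ, min (G.degree w) k = ∑ w ∈ Uᶜ, S.degree w + m * k := by
    rw [hKc, Finset.sum_union hdisj,
      Finset.sum_image (fun a _ b _ h => Sum.inl_injective h),
      Finset.sum_image (fun a _ b _ h => Sum.inr_injective h)]
    congr 1
    · refine Finset.sum_congr rfl fun w hw => ?_
      rw [hG, hdW w (Finset.mem_compl.mp hw)]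
      exact min_eq_left (hWdeg w (Finset.mem_compl.mp hw))
    · have : ∀ x : β, min (G.degree (inr x)) k = k := by
        intro x
        rw [hG, hdB x]
        exact min_eq_right (Nat.le_add_left _ _)
      rw [Finset.sum_congr rfl (fun x _ => this x), Finset.sum_const, smul_eq_mul, card_univ]
  -- deduce equalities
  have hT1le : ∑ v ∈ K, #(K.filter (G.Adj v)) ≤ k * (k - 1) := by
    calc ∑ v ∈ K, #(K.filter (G.Adj v)) ≤ ∑ v ∈ K, (k - 1) := Finset.sum_le_sum h1
    _ = k * (k - 1) := by rw [Finset.sum_const, smul_eq_mul, hKcard]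
  have hT2le : ∑ w ∈ Kᶜ, #(K.filter (G.Adj w)) ≤ ∑ w ∈ Kᶜ, min (G.degree w) k :=
    Finset.sum_le_sum h2
  have key : ∀ t1 t2 c1 c2 : ℕ, t1 + t2 = c1 + c2 → t1 ≤ c1 → t2 ≤ c2 → t1 = c1 ∧ t2 = c2 := by
    intros; omega
  have htot : ∑ v ∈ K, #(K.filter (G.Adj v)) + ∑ w ∈ Kᶜ, #(K.filter (G.Adj w))
      = k * (k - 1) + ∑ w ∈ Kᶜ, min (G.degree w) k := by
    rw [← hsum, hLHS, hmin]
  obtain ⟨hT1, hT2⟩ := key _ _ _ _ htot hT1le hT2le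
  have hE1 : ∀ v ∈ K, #(K.filter (G.Adj v)) = k - 1 :=
    (Finset.sum_eq_sum_iff_of_le h1).mp
      (by rw [hT1, Finset.sum_const, smul_eq_mul, hKcard])
  have hE2 : ∀ w ∈ Kᶜ, #(K.filter (G.Adj w)) = min (G.degree w) k :=
    (Finset.sum_eq_sum_iff_of_le h2).mp hT2
  have hclq : ∀ u ∈ U, ∀ v ∈ U, u ≠ v → G.Adj (inl u) (inl v) := by
    intro u hu v hv huv
    have hmem : inl u ∈ K := (hinlK u).mpr hu
    have heq : K.filter (G.Adj (inl u)) = K.erase (inl u) :=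
      Finset.eq_of_subset_of_card_le (hsub _ hmem)
        (by rw [Finset.card_erase_of_mem hmem, hKcard, hE1 _ hmem])
    have hv' : inl v ∈ K.filter (G.Adj (inl u)) := by
      rw [heq, Finset.mem_erase]
      exact ⟨fun h => huv (Sum.inl_injective h).symm, (hinlK v).mpr hv⟩
    exact (Finset.mem_filter.mp hv').2
  have hcrossU : ∀ x : β, K.filter (G.Adj (inr x)) = K := by
    intro x
    have hcard : #(K.filter (G.Adj (inr x))) = k := by
      rw [hE2 _ (Finset.mem_compl.mpr (hinrK x)), hG, hdB x]
      exact min_eq_right (Nat.le_add_left _ _)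
    exact Finset.eq_of_subset_of_card_le (Finset.filter_subset _ _) (by rw [hcard, hKcard])
  have hnoW : ∀ w ∉ U, ∀ v, G.Adj (inl w) v → v ∈ K := by
    intro w hw v hv
    have hmem : inl w ∈ Kᶜ := Finset.mem_compl.mpr (by rw [hinlK]; exact hw)
    have hcard : #(K.filter (G.Adj (inl w))) = G.degree (inl w) := by
      rw [hE2 _ hmem]
      exact min_eq_left (by rw [hG, hdW w hw]; exact hWdeg w hw)
    have heq : K.filter (G.Adj (inl w)) = univ.filter (G.Adj (inl w)) :=
      Finset.eq_of_subset_of_card_le (Finset.filter_subset_filter _ (Finset.subset_univ K))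
        (by rw [hcard, ← degree_eq_card_filter])
    have hv2 : v ∈ univ.filter (G.Adj (inl w)) := Finset.mem_filter.mpr ⟨Finset.mem_univ v, hv⟩
    rw [← heq] at hv2
    exact (Finset.mem_filter.mp hv2).1
  refine ⟨?_, hclq, ?_⟩
  · intro a x
    constructor
    · intro h
      by_contra ha
      exact hinrK x (hnoW a ha _ h)
    · intro ha
      have h2' : inl a ∈ K.filter (G.Adj (inr x)) := by
        rw [hcrossU x]; exact (hinlK a).mpr ha
      exact ((Finset.mem_filter.mp h2').2).symm
  · intro w hw w' hw' hadj
    have hmem := hnoW w hw _ hadj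
    rw [hinlK] at hmem
    exact hw' hmem

lemma comap_degrees
    (hclique : ∀ u ∈ U, ∀ v ∈ U, u ≠ v → S.Adj u v)
    (hindep : ∀ u ∉ U, ∀ v ∉ U, ¬ S.Adj u v)
    (hdU : ∀ u ∈ U, d (Sum.inl u) = S.degree u + Fintype.card β)
    (hdW : ∀ w ∉ U, d (Sum.inl w) = S.degree w)
    (hdB : ∀ x : β, d (Sum.inr x) = H.degree x + U.card)
    (G : SimpleGraph (α ⊕ β)) (hG : ∀ v, G.degree v = d v) :
    (∀ a, (G.comap inl).degree a = S.degree a) ∧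
    (∀ x, (G.comap inr).degree x = H.degree x) := by
  obtain ⟨hcross, -, -⟩ :=
    realization_structure S U H d hclique hindep hdU hdW hdB G hG
  constructor
  · intro a
    have h := degree_sum_decomp G (inl a)
    rw [hG, ← comap_inl_degree] at h
    have h2 : (∑ x : β, if G.Adj (inl a) (inr x) then 1 else 0)
        = if a ∈ U then Fintype.card β else 0 := by
      simp only [hcross]
      by_cases h : a ∈ U <;> simp [h]
    rw [h2] at h
    by_cases ha : a ∈ U
    · rw [hdU a ha, if_pos ha] at h; omega
    · rw [hdW a ha, if_neg ha] at h; omega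
  · intro x
    have h := degree_sum_decomp G (inr x)
    rw [hG, ← comap_inr_degree] at h
    have h2 : (∑ a : α, if G.Adj (inr x) (inl a) then 1 else 0) = U.card := by
      have hc : ∀ a : α, G.Adj (inr x) (inl a) ↔ a ∈ U := by
        intro a; rw [G.adj_comm]; exact hcross a x
      simp only [hc]
      rw [← Finset.card_filter]
      congr 1
      ext a; simp
    rw [h2, hdB x] at h
    omega

lemma barrusComp_recon
    (hclique : ∀ u ∈ U, ∀ v ∈ U, u ≠ v → S.Adj u v)
    (hindep : ∀ u ∉ U, ∀ v ∉ U, ¬ S.Adj u v)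
    (hdU : ∀ u ∈ U, d (Sum.inl u) = S.degree u + Fintype.card β)
    (hdW : ∀ w ∉ U, d (Sum.inl w) = S.degree w)
    (hdB : ∀ x : β, d (Sum.inr x) = H.degree x + U.card)
    (G : SimpleGraph (α ⊕ β)) (hG : ∀ v, G.degree v = d v) :
    BarrusComp U (G.comap inl) (G.comap inr) = G := by
  obtain ⟨hcross, -, -⟩ :=
    realization_structure S U H d hclique hindep hdU hdW hdB G hG
  ext v w
  rcases v with a | x <;> rcases w with b | y
  · exact Iff.rfl
  · exact (barrusComp_adj_lr U _ _ a y).trans (hcross a y).symm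
  · show (b ∈ U) ↔ G.Adj (inr x) (inl b)
    rw [G.adj_comm]
    exact (hcross b x).symm
  · exact Iff.rfl

lemma comap_barrusComp_inl (P : SimpleGraph α) (Q : SimpleGraph β) :
    (BarrusComp U P Q).comap inl = P := by
  ext a b; exact Iff.rfl

lemma comap_barrusComp_inr (P : SimpleGraph α) (Q : SimpleGraph β) :
    (BarrusComp U P Q).comap inr = Q := by
  ext x y; exact Iff.rfl

lemma isSwap_decomp
    (hclique : ∀ u ∈ U, ∀ v ∈ U, u ≠ v → S.Adj u v)
    (hindep : ∀ u ∉ U, ∀ v ∉ U, ¬ S.Adj u v)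
    (hdU : ∀ u ∈ U, d (Sum.inl u) = S.degree u + Fintype.card β)
    (hdW : ∀ w ∉ U, d (Sum.inl w) = S.degree w)
    (hdB : ∀ x : β, d (Sum.inr x) = H.degree x + U.card)
    (G G' : SimpleGraph (α ⊕ β)) (hG : ∀ v, G.degree v = d v)
    (hG' : ∀ v, G'.degree v = d v) :
    IsSwap G G' ↔
      (G.comap inl = G'.comap inl ∧ IsSwap (G.comap inr) (G'.comap inr)) ∨
      (G.comap inr = G'.comap inr ∧ IsSwap (G.comap inl) (G'.comap inl)) := by
  obtain ⟨hcross, -, -⟩ :=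
    realization_structure S U H d hclique hindep hdU hdW hdB G hG
  obtain ⟨hcross', -, -⟩ :=
    realization_structure S U H d hclique hindep hdU hdW hdB G' hG'
  have hsame : ∀ x y : α ⊕ β, ¬(G.Adj x y ↔ G'.Adj x y) → x.isLeft = y.isLeft := by
    intro x y hxy
    rcases x with p | p <;> rcases y with q | q
    · rfl
    · exact absurd (by rw [hcross p q, hcross' p q]) hxy
    · exact absurd (by rw [G.adj_comm, G'.adj_comm, hcross q p, hcross' q p]) hxy
    · rfl
  constructor
  · rw [isSwap_iff_adj]
    rintro ⟨a, b, c, dd, hab, hac, had, hbc, hbd, hcd, hGac, hGbd, hGbc, hGad, hch⟩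
    have hG'ad : G'.Adj a dd := (hch a dd).mpr (Or.inr (Or.inr rfl))
    have hG'bc : G'.Adj b c := (hch b c).mpr (Or.inr (Or.inl rfl))
    have hG'ac : ¬ G'.Adj a c := by
      rw [hch a c]
      simp only [Sym2.eq_iff]
      tauto
    have hG'bd : ¬ G'.Adj b dd := by
      rw [hch b dd]
      simp only [Sym2.eq_iff]
      tauto
    have sad := hsame a dd fun h => hGad (h.mpr hG'ad)
    have sbc := hsame b c fun h => hGbc (h.mpr hG'bc)
    have sac := hsame a c fun h => hG'ac (h.mp hGac)
    have sbd := hsame b dd fun h => hG'bd (h.mp hGbd)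
    rcases a with a₀ | a₀
    · obtain ⟨c₀, rfl⟩ : ∃ c₀, c = inl c₀ := by
        rcases c with c₀ | c₀; exacts [⟨c₀, rfl⟩, by simp at sac]
      obtain ⟨d₀, rfl⟩ : ∃ d₀, dd = inl d₀ := by
        rcases dd with d₀ | d₀; exacts [⟨d₀, rfl⟩, by simp at sad]
      obtain ⟨b₀, rfl⟩ : ∃ b₀, b = inl b₀ := by
        rcases b with b₀ | b₀; exacts [⟨b₀, rfl⟩, by simp at sbc]
      refine Or.inr ⟨?_, ?_⟩
      · ext x y
        show G.Adj (inr x) (inr y) ↔ G'.Adj (inr x) (inr y)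
        rw [hch (inr x) (inr y)]
        simp [Sym2.eq_iff]
      · rw [isSwap_iff_adj]
        refine ⟨a₀, b₀, c₀, d₀,
          fun h => hab (by rw [h]), fun h => hac (by rw [h]), fun h => had (by rw [h]),
          fun h => hbc (by rw [h]), fun h => hbd (by rw [h]), fun h => hcd (by rw [h]),
          hGac, hGbd, hGbc, hGad, ?_⟩
        intro x y
        show G'.Adj (inl x) (inl y) ↔ _
        rw [hch (inl x) (inl y)]
        simp [Sym2.eq_iff]
    · obtain ⟨c₀, rfl⟩ : ∃ c₀, c = inr c₀ := by
        rcases c with c₀ | c₀; exacts [by simp at sac, ⟨c₀, rfl⟩]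
      obtain ⟨d₀, rfl⟩ : ∃ d₀, dd = inr d₀ := by
        rcases dd with d₀ | d₀; exacts [by simp at sad, ⟨d₀, rfl⟩]
      obtain ⟨b₀, rfl⟩ : ∃ b₀, b = inr b₀ := by
        rcases b with b₀ | b₀; exacts [by simp at sbc, ⟨b₀, rfl⟩]
      refine Or.inl ⟨?_, ?_⟩
      · ext x y
        show G.Adj (inl x) (inl y) ↔ G'.Adj (inl x) (inl y)
        rw [hch (inl x) (inl y)]
        simp [Sym2.eq_iff]
      · rw [isSwap_iff_adj]
        refine ⟨a₀, b₀, c₀, d₀,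
          fun h => hab (by rw [h]), fun h => hac (by rw [h]), fun h => had (by rw [h]),
          fun h => hbc (by rw [h]), fun h => hbd (by rw [h]), fun h => hcd (by rw [h]),
          hGac, hGbd, hGbc, hGad, ?_⟩
        intro x y
        show G'.Adj (inr x) (inr y) ↔ _
        rw [hch (inr x) (inr y)]
        simp [Sym2.eq_iff]
  · have lift : ∀ G G' : SimpleGraph (α ⊕ β),
        (∀ a x, G.Adj (inl a) (inr x) ↔ a ∈ U) →
        (∀ a x, G'.Adj (inl a) (inr x) ↔ a ∈ U) →
        G.comap inl = G'.comap inl → IsSwap (G.comap inr) (G'.comap inr) →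
        IsSwap G G' := by
      intro G G' hcr hcr' heq hsw
      rw [isSwap_iff_adj] at hsw ⊢
      obtain ⟨a, b, c, dd, hab, hac, had, hbc, hbd, hcd, h1, h2, h3, h4, hch⟩ := hsw
      have hadje : ∀ p q : α, G.Adj (inl p) (inl q) ↔ G'.Adj (inl p) (inl q) := by
        intro p q
        exact iff_of_eq (congrArg (fun Z : SimpleGraph α => Z.Adj p q) heq)
      refine ⟨inr a, inr b, inr c, inr dd,
        fun h => hab (Sum.inr_injective h), fun h => hac (Sum.inr_injective h),
        fun h => had (Sum.inr_injective h), fun h => hbc (Sum.inr_injective h),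
        fun h => hbd (Sum.inr_injective h), fun h => hcd (Sum.inr_injective h),
        h1, h2, h3, h4, ?_⟩
      intro x y
      rcases x with p | p <;> rcases y with q | q
      · simp only [Sym2.eq_iff]
        simp [← hadje p q]
      · simp only [Sym2.eq_iff]
        simp [hcr p q, hcr' p q]
      · simp only [Sym2.eq_iff]
        simp only [reduceCtorEq, and_false, false_and, or_self, not_false_iff, and_true,
          or_false, false_or]
        rw [G'.adj_comm, G.adj_comm, hcr' q p, hcr q p]
      · have := hch p q
        simp only [comap_adj] at this
        rw [this]
        simp [Sym2.eq_iff]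
    have liftl : ∀ G G' : SimpleGraph (α ⊕ β),
        (∀ a x, G.Adj (inl a) (inr x) ↔ a ∈ U) →
        (∀ a x, G'.Adj (inl a) (inr x) ↔ a ∈ U) →
        G.comap inr = G'.comap inr → IsSwap (G.comap inl) (G'.comap inl) →
        IsSwap G G' := by
      intro G G' hcr hcr' heq hsw
      rw [isSwap_iff_adj] at hsw ⊢
      obtain ⟨a, b, c, dd, hab, hac, had, hbc, hbd, hcd, h1, h2, h3, h4, hch⟩ := hsw
      have hadje : ∀ p q : β, G.Adj (inr p) (inr q) ↔ G'.Adj (inr p) (inr q) := by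
        intro p q
        exact iff_of_eq (congrArg (fun Z : SimpleGraph β => Z.Adj p q) heq)
      refine ⟨inl a, inl b, inl c, inl dd,
        fun h => hab (Sum.inl_injective h), fun h => hac (Sum.inl_injective h),
        fun h => had (Sum.inl_injective h), fun h => hbc (Sum.inl_injective h),
        fun h => hbd (Sum.inl_injective h), fun h => hcd (Sum.inl_injective h),
        h1, h2, h3, h4, ?_⟩
      intro x y
      rcases x with p | p <;> rcases y with q | q
      · have := hch p q
        simp only [comap_adj] at this
        rw [this]
        simp [Sym2.eq_iff]
      · simp only [Sym2.eq_iff]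
        simp [hcr p q, hcr' p q]
      · simp only [Sym2.eq_iff]
        simp only [reduceCtorEq, and_false, false_and, or_self, not_false_iff, and_true,
          or_false, false_or]
        rw [G'.adj_comm, G.adj_comm, hcr' q p, hcr q p]
      · simp only [Sym2.eq_iff]
        simp [← hadje p q]
    rintro (⟨heq, hsw⟩ | ⟨heq, hsw⟩)
    · exact lift G G' hcross hcross' heq hsw
    · exact liftl G G' hcross hcross' heq hsw

end Aux


/-- **Barrus 2015.**  Let `S` be a split graph on `α` with designated partition
`⟨U, Uᶜ⟩` and `H` a simple graph on `β`, and let `d` be the degree function of the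
Tyshkevich composition `S ∘ H`, i.e. `d(u) = deg_S(u) + |β|` for `u ∈ U`,
`d(w) = deg_S(w)` for `w ∈ Uᶜ`, and `d(x) = deg_H(x) + |U|` for `x ∈ β`.  Then the
realization graph `𝔾(d)` is isomorphic to the Cartesian (box) product
`𝔾(deg_S) □ 𝔾(deg_H)`. -/
theorem realizationGraph_comp_iso_boxProd
    {α β : Type*} [Fintype α] [Fintype β] [DecidableEq α]
    (S : SimpleGraph α) (H : SimpleGraph β) (U : Finset α)
    (hclique : ∀ u ∈ U, ∀ v ∈ U, u ≠ v → S.Adj u v)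
    (hindep : ∀ u ∉ U, ∀ v ∉ U, ¬ S.Adj u v)
    (d : α ⊕ β → ℕ)
    (hdU : ∀ u ∈ U, d (Sum.inl u) = S.degree u + Fintype.card β)
    (hdW : ∀ w ∉ U, d (Sum.inl w) = S.degree w)
    (hdB : ∀ x : β, d (Sum.inr x) = H.degree x + U.card) :
    Nonempty
      (realizationGraph d ≃g
        (realizationGraph (fun v => S.degree v)).boxProd
          (realizationGraph (fun v => H.degree v))) := by
  classical
  have hcd := fun (G : SimpleGraph (α ⊕ β)) (hG : ∀ v, G.degree v = d v) =>
    comap_degrees S U H d hclique hindep hdU hdW hdB G hG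
  have hcompdeg : ∀ (P : SimpleGraph α), (∀ v, P.degree v = S.degree v) →
      ∀ (Q : SimpleGraph β), (∀ v, Q.degree v = H.degree v) →
      ∀ v : α ⊕ β, (BarrusComp U P Q).degree v = d v := by
    intro P hP Q hQ v
    rcases v with a | x
    · rw [barrusComp_degree_inl, hP a]
      by_cases ha : a ∈ U
      · rw [if_pos ha, hdU a ha]
      · rw [if_neg ha, hdW a ha, add_zero]
    · rw [barrusComp_degree_inr, hQ x, hdB x]
  refine ⟨⟨⟨fun G => (⟨G.1.comap inl, (hcd G.1 G.2).1⟩, ⟨G.1.comap inr, (hcd G.1 G.2).2⟩),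
      fun PQ => ⟨BarrusComp U PQ.1.1 PQ.2.1, hcompdeg PQ.1.1 PQ.1.2 PQ.2.1 PQ.2.2⟩,
      ?_, ?_⟩, ?_⟩⟩
  · intro G
    exact Subtype.ext (barrusComp_recon S U H d hclique hindep hdU hdW hdB G.1 G.2)
  · rintro ⟨⟨P, hP⟩, ⟨Q, hQ⟩⟩
    refine Prod.ext ?_ ?_
    · exact Subtype.ext (comap_barrusComp_inl U P Q)
    · exact Subtype.ext (comap_barrusComp_inr U P Q)
  · intro G G'
    have D := isSwap_decomp S U H d hclique hindep hdU hdW hdB G.1 G'.1 G.2 G'.2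
    have D' := isSwap_decomp S U H d hclique hindep hdU hdW hdB G'.1 G.1 G'.2 G.2
    show ((realizationGraph fun v => S.degree v).boxProd
        (realizationGraph fun v => H.degree v)).Adj _ _ ↔ (realizationGraph d).Adj G G'
    rw [SimpleGraph.boxProd_adj]
    simp only [realizationGraph, SimpleGraph.fromRel_adj, Equiv.coe_fn_mk, ne_eq,
      Subtype.mk.injEq, Subtype.ext_iff]
    constructor
    · rintro (⟨⟨hne, hsw⟩, heq⟩ | ⟨⟨hne, hsw⟩, heq⟩)
      · refine ⟨fun h => hne (by rw [h]), ?_⟩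
        rcases hsw with h | h
        · exact Or.inl (D.mpr (Or.inr ⟨heq, h⟩))
        · exact Or.inr (D'.mpr (Or.inr ⟨heq.symm, h⟩))
      · refine ⟨fun h => hne (by rw [h]), ?_⟩
        rcases hsw with h | h
        · exact Or.inl (D.mpr (Or.inl ⟨heq, h⟩))
        · exact Or.inr (D'.mpr (Or.inl ⟨heq.symm, h⟩))
    · rintro ⟨hne, hsw | hsw⟩
      · rcases D.mp hsw with ⟨heq, hs⟩ | ⟨heq, hs⟩
        · exact Or.inr ⟨⟨isSwap_ne hs, Or.inl hs⟩, heq⟩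
        · exact Or.inl ⟨⟨isSwap_ne hs, Or.inl hs⟩, heq⟩
      · rcases D'.mp hsw with ⟨heq, hs⟩ | ⟨heq, hs⟩
        · exact Or.inr ⟨⟨Ne.symm (isSwap_ne hs), Or.inr hs⟩, heq.symm⟩
        · exact Or.inl ⟨⟨Ne.symm (isSwap_ne hs), Or.inr hs⟩, heq.symm⟩
end

section
/- Let B be a bipartite graph on finite parts (𝔘, 𝔚) (primary class 𝔘, secondary class 𝔚) with primary degree sequence u₁ ≥ u₂ ≥ … ≥ u_{|𝔘|} and secondary degree sequence w₁ ≥ w₂ ≥ … ≥ w_{|𝔚|}, both listed in nonincreasing order. Then B is decomposable if and only if there exist integers p, q with 0 < p < |𝔘|, 0 < q < |𝔚| and Σ_{i=1}^{p} u_i = p·q + Σ_{i=q+1}^{|𝔚|} w_i. -/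
open Finset

private lemma card_filter_lt_fin (n p : ℕ) (h : p ≤ n) :
    ((Finset.univ : Finset (Fin n)).filter (fun a : Fin n => (a : ℕ) < p)).card = p := by
  calc ((Finset.univ : Finset (Fin n)).filter (fun a : Fin n => (a : ℕ) < p)).card
      = ∑ a : Fin n, (if (a : ℕ) < p then 1 else 0) := Finset.card_filter _ _
    _ = ∑ i ∈ Finset.range n, (if i < p then 1 else 0) :=
        Fin.sum_univ_eq_sum_range (fun i => if i < p then 1 else 0) n
    _ = ((Finset.range n).filter (fun i => i < p)).card := (Finset.card_filter _ _).symm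
    _ = (Finset.range p).card := by congr 1; ext x; simp; omega
    _ = p := Finset.card_range p

private lemma sum_prefix_eq (n p : ℕ) (h : p ≤ n) (f : ℕ → ℕ) :
    ∑ a ∈ (Finset.univ : Finset (Fin n)).filter (fun a : Fin n => (a : ℕ) < p), f ((a : ℕ) + 1)
      = ∑ i ∈ Finset.Icc 1 p, f i := by
  calc ∑ a ∈ (Finset.univ : Finset (Fin n)).filter (fun a : Fin n => (a : ℕ) < p), f ((a : ℕ) + 1)
      = ∑ a : Fin n, (if (a : ℕ) < p then f ((a : ℕ) + 1) else 0) := Finset.sum_filter _ _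
    _ = ∑ i ∈ Finset.range n, (if i < p then f (i + 1) else 0) :=
        Fin.sum_univ_eq_sum_range (fun i => if i < p then f (i + 1) else 0) n
    _ = ∑ i ∈ (Finset.range n).filter (fun i => i < p), f (i + 1) := (Finset.sum_filter _ _).symm
    _ = ∑ i ∈ Finset.range p, f (i + 1) := by congr 1; ext x; simp; omega
    _ = ∑ i ∈ Finset.Icc 1 p, f i := by
        rw [← Finset.Ico_add_one_right_eq_Icc, Finset.sum_Ico_eq_sum_range]
        simp [add_comm]

private lemma sum_suffix_eq (n q : ℕ) (h : q ≤ n) (f : ℕ → ℕ) :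
    ∑ a ∈ (Finset.univ : Finset (Fin n)).filter (fun a : Fin n => ¬ (a : ℕ) < q), f ((a : ℕ) + 1)
      = ∑ i ∈ Finset.Icc (q + 1) n, f i := by
  calc ∑ a ∈ (Finset.univ : Finset (Fin n)).filter (fun a : Fin n => ¬ (a : ℕ) < q), f ((a : ℕ) + 1)
      = ∑ a : Fin n, (if ¬ (a : ℕ) < q then f ((a : ℕ) + 1) else 0) := Finset.sum_filter _ _
    _ = ∑ i ∈ Finset.range n, (if ¬ i < q then f (i + 1) else 0) :=
        Fin.sum_univ_eq_sum_range (fun i => if ¬ i < q then f (i + 1) else 0) n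
    _ = ∑ i ∈ (Finset.range n).filter (fun i => ¬ i < q), f (i + 1) := (Finset.sum_filter _ _).symm
    _ = ∑ i ∈ Finset.Ico q n, f (i + 1) := by congr 1; ext x; simp; omega
    _ = ∑ i ∈ Finset.range (n - q), f (q + i + 1) := by rw [Finset.sum_Ico_eq_sum_range]
    _ = ∑ i ∈ Finset.Icc (q + 1) n, f i := by
        rw [← Finset.Ico_add_one_right_eq_Icc, Finset.sum_Ico_eq_sum_range]
        have : n + 1 - (q + 1) = n - q := by omega
        rw [this]
        exact Finset.sum_congr rfl (fun x _ => by congr 1; omega)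

private lemma sum_eq_sum_prefix {n : ℕ} (d : Fin n → ℕ)
    (hmono : ∀ a b : Fin n, (a : ℕ) ≤ (b : ℕ) → d b ≤ d a)
    (S : Finset (Fin n)) (c : ℕ)
    (h1 : ∀ a ∈ S, c ≤ d a) (h2 : ∀ a ∉ S, d a ≤ c) :
    ∑ a ∈ S, d a
      = ∑ a ∈ (Finset.univ : Finset (Fin n)).filter (fun a : Fin n => (a : ℕ) < S.card), d a := by
  set P := (Finset.univ : Finset (Fin n)).filter (fun a : Fin n => (a : ℕ) < S.card) with hPdef
  have hScard : S.card ≤ n := by simpa using Finset.card_le_univ S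
  have hcard : P.card = S.card := card_filter_lt_fin n S.card hScard
  have hkey : (S \ P).card = (P \ S).card := by
    have h1' := Finset.card_inter_add_card_sdiff S P
    have h2' := Finset.card_inter_add_card_sdiff P S
    rw [Finset.inter_comm] at h2'
    omega
  have hmemP : ∀ a : Fin n, a ∈ P ↔ (a : ℕ) < S.card := by
    intro a; simp [hPdef]
  have hdiff : ∑ a ∈ S \ P, d a = ∑ a ∈ P \ S, d a := by
    by_cases hne : (S \ P).Nonempty
    · have hne' : (P \ S).Nonempty := by
        rw [← Finset.card_pos, ← hkey, Finset.card_pos]; exact hne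
      obtain ⟨b, hb⟩ := hne'
      obtain ⟨a0, ha0⟩ := hne
      have hbP : b ∈ P := (Finset.mem_sdiff.mp hb).1
      have hbS : b ∉ S := (Finset.mem_sdiff.mp hb).2
      have ha0S : a0 ∈ S := (Finset.mem_sdiff.mp ha0).1
      have ha0P : a0 ∉ P := (Finset.mem_sdiff.mp ha0).2
      have hconst1 : ∀ a ∈ S \ P, d a = c := by
        intro a ha
        have haS : a ∈ S := (Finset.mem_sdiff.mp ha).1
        have haP : a ∉ P := (Finset.mem_sdiff.mp ha).2
        have hle : (b : ℕ) ≤ (a : ℕ) := by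
          have h3 := (hmemP b).mp hbP
          have h4 : ¬ (a : ℕ) < S.card := fun h => haP ((hmemP a).mpr h)
          omega
        have := hmono b a hle
        have := h1 a haS
        have := h2 b hbS
        omega
      have hconst2 : ∀ b' ∈ P \ S, d b' = c := by
        intro b' hb'
        have hb'P : b' ∈ P := (Finset.mem_sdiff.mp hb').1
        have hb'S : b' ∉ S := (Finset.mem_sdiff.mp hb').2
        have hle : (b' : ℕ) ≤ (a0 : ℕ) := by
          have h3 := (hmemP b').mp hb'P
          have h4 : ¬ (a0 : ℕ) < S.card := fun h => ha0P ((hmemP a0).mpr h)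
          omega
        have := hmono b' a0 hle
        have := h1 a0 ha0S
        have := h2 b' hb'S
        omega
      rw [Finset.sum_congr rfl hconst1, Finset.sum_congr rfl hconst2,
        Finset.sum_const, Finset.sum_const, hkey]
    · rw [Finset.not_nonempty_iff_eq_empty] at hne
      have : (P \ S) = ∅ := by
        rw [← Finset.card_eq_zero, ← hkey, hne, Finset.card_empty]
      rw [hne, this]
  calc ∑ a ∈ S, d a = ∑ a ∈ S ∩ P, d a + ∑ a ∈ S \ P, d a :=
        (Finset.sum_inter_add_sum_sdiff S P d).symm
    _ = ∑ a ∈ P ∩ S, d a + ∑ a ∈ P \ S, d a := by rw [Finset.inter_comm, hdiff]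
    _ = ∑ a ∈ P, d a := Finset.sum_inter_add_sum_sdiff P S d

/-- **Decomposability of splitted bipartite graphs.**  Let `B` be a bipartite graph
with primary class `Fin m` and secondary class `Fin l`, given by the edge relation
`R` (with decidable adjacency), whose primary degree sequence is `u 1 ≥ ⋯ ≥ u m`
and whose secondary degree sequence is `w 1 ≥ ⋯ ≥ w l`, both nonincreasing
(vertex `i` has degree `u (i+1)`, resp. `w (i+1)`).  `B` is *decomposable* — there are
partitions `𝔘 = 𝔘₁ ⊔ 𝔘₂` (here `𝔘₁ = U₁`, `𝔘₂ = U₁ᶜ`) and `𝔚 = 𝔚₁ ⊔ 𝔚₂`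
(here `𝔚₂ = W₂`, `𝔚₁ = W₂ᶜ`) with `0 < |𝔘₁| < m` and `0 < |𝔚₂| < l` such that every
`𝔘₁–𝔚₂` pair is an edge and no `𝔘₂–𝔚₁` pair is an edge — iff there exist integers
`p, q` with `0 < p < m`, `0 < q < l` and `∑_{i=1}^p u i = p·q + ∑_{i=q+1}^l w i`. -/
theorem splitted_bipartite_decomposable_iff
    {m l : ℕ} (R : Fin m → Fin l → Prop) [∀ i j, Decidable (R i j)]
    (u w : ℕ → ℕ)
    (hdegU : ∀ i : Fin m,
      (Finset.univ.filter (fun j => R i j)).card = u ((i : ℕ) + 1))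
    (hdegW : ∀ j : Fin l,
      (Finset.univ.filter (fun i => R i j)).card = w ((j : ℕ) + 1))
    (hmonoU : ∀ i j : ℕ, 1 ≤ i → i ≤ j → j ≤ m → u j ≤ u i)
    (hmonoW : ∀ i j : ℕ, 1 ≤ i → i ≤ j → j ≤ l → w j ≤ w i) :
    (∃ (U₁ : Finset (Fin m)) (W₂ : Finset (Fin l)),
      0 < U₁.card ∧ U₁.card < m ∧ 0 < W₂.card ∧ W₂.card < l ∧
      (∀ a ∈ U₁, ∀ b ∈ W₂, R a b) ∧
      (∀ a ∉ U₁, ∀ b ∉ W₂, ¬ R a b)) ↔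
    (∃ p q : ℕ, 0 < p ∧ p < m ∧ 0 < q ∧ q < l ∧
      ∑ i ∈ Finset.Icc 1 p, u i =
        p * q + ∑ i ∈ Finset.Icc (q + 1) l, w i) := by
  constructor
  · rintro ⟨U₁, W₂, hU0, hUm, hW0, hWl, hall, hnone⟩
    refine ⟨U₁.card, W₂.card, hU0, hUm, hW0, hWl, ?_⟩
    have hu_mono : ∀ a b : Fin m, (a : ℕ) ≤ (b : ℕ) →
        u ((b : ℕ) + 1) ≤ u ((a : ℕ) + 1) := fun a b hab =>
      hmonoU ((a : ℕ) + 1) ((b : ℕ) + 1) (by omega) (by omega) (by have := b.isLt; omega)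
    have hw_mono : ∀ a b : Fin l, (a : ℕ) ≤ (b : ℕ) →
        w ((b : ℕ) + 1) ≤ w ((a : ℕ) + 1) := fun a b hab =>
      hmonoW ((a : ℕ) + 1) ((b : ℕ) + 1) (by omega) (by omega) (by have := b.isLt; omega)
    have hUhigh : ∀ a ∈ U₁, W₂.card ≤ u ((a : ℕ) + 1) := by
      intro a ha
      rw [← hdegU a]
      exact Finset.card_le_card fun b hb =>
        Finset.mem_filter.mpr ⟨Finset.mem_univ b, hall a ha b hb⟩
    have hUlow : ∀ a ∉ U₁, u ((a : ℕ) + 1) ≤ W₂.card := by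
      intro a ha
      rw [← hdegU a]
      refine Finset.card_le_card fun b hb => ?_
      by_contra hbW
      exact hnone a ha b hbW (Finset.mem_filter.mp hb).2
    have hWhigh : ∀ b ∈ W₂, U₁.card ≤ w ((b : ℕ) + 1) := by
      intro b hb
      rw [← hdegW b]
      exact Finset.card_le_card fun a ha =>
        Finset.mem_filter.mpr ⟨Finset.mem_univ a, hall a ha b hb⟩
    have hWlow : ∀ b ∉ W₂, w ((b : ℕ) + 1) ≤ U₁.card := by
      intro b hb
      rw [← hdegW b]
      refine Finset.card_le_card fun a ha => ?_
      by_contra haU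
      exact hnone a haU b hb (Finset.mem_filter.mp ha).2
    have hsumU : ∑ a ∈ U₁, u ((a : ℕ) + 1) = ∑ i ∈ Finset.Icc 1 U₁.card, u i := by
      rw [sum_eq_sum_prefix (fun a : Fin m => u ((a : ℕ) + 1)) hu_mono U₁ W₂.card hUhigh hUlow]
      exact sum_prefix_eq m U₁.card hUm.le u
    have hsumW : ∑ b ∈ W₂, w ((b : ℕ) + 1)
        = ∑ b ∈ (Finset.univ : Finset (Fin l)).filter
            (fun b : Fin l => (b : ℕ) < W₂.card), w ((b : ℕ) + 1) :=
      sum_eq_sum_prefix (fun b : Fin l => w ((b : ℕ) + 1)) hw_mono W₂ U₁.card hWhigh hWlow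
    have hcompl : ∑ b ∈ W₂ᶜ, w ((b : ℕ) + 1)
        = ∑ i ∈ Finset.Icc (W₂.card + 1) l, w i := by
      have h1 := Finset.sum_add_sum_compl W₂ (fun b : Fin l => w ((b : ℕ) + 1))
      have h2 := Finset.sum_filter_add_sum_filter_not (Finset.univ : Finset (Fin l))
        (fun b : Fin l => (b : ℕ) < W₂.card) (fun b : Fin l => w ((b : ℕ) + 1))
      have h3 := sum_suffix_eq l W₂.card hWl.le w
      omega
    have hcount : ∑ a ∈ U₁, u ((a : ℕ) + 1)
        = U₁.card * W₂.card + ∑ b ∈ W₂ᶜ, w ((b : ℕ) + 1) := by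
      have hL : ∀ a ∈ U₁, u ((a : ℕ) + 1)
          = W₂.card + ∑ b ∈ W₂ᶜ, (if R a b then (1 : ℕ) else 0) := by
        intro a ha
        rw [← hdegU a, Finset.card_filter,
          ← Finset.sum_add_sum_compl W₂ (fun b => if R a b then (1 : ℕ) else 0)]
        congr 1
        calc ∑ b ∈ W₂, (if R a b then (1 : ℕ) else 0)
            = ∑ _b ∈ W₂, 1 := Finset.sum_congr rfl (fun b hb => by simp [hall a ha b hb])
          _ = W₂.card := by simp
      rw [Finset.sum_congr rfl hL, Finset.sum_add_distrib, Finset.sum_const, smul_eq_mul]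
      congr 1
      rw [Finset.sum_comm]
      refine Finset.sum_congr rfl fun b hb => ?_
      have hbW : b ∉ W₂ := Finset.mem_compl.mp hb
      rw [← hdegW b, Finset.card_filter,
        ← Finset.sum_add_sum_compl U₁ (fun a => if R a b then (1 : ℕ) else 0)]
      have hz : ∑ a ∈ U₁ᶜ, (if R a b then (1 : ℕ) else 0) = 0 :=
        Finset.sum_eq_zero fun a ha => by simp [hnone a (Finset.mem_compl.mp ha) b hbW]
      rw [hz, add_zero]
    omega
  · rintro ⟨p, q, hp0, hpm, hq0, hql, hsum⟩
    set U₁ := (Finset.univ : Finset (Fin m)).filter (fun a : Fin m => (a : ℕ) < p) with hU₁def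
    set W₂ := (Finset.univ : Finset (Fin l)).filter (fun b : Fin l => (b : ℕ) < q) with hW₂def
    have hUcard : U₁.card = p := card_filter_lt_fin m p hpm.le
    have hWcard : W₂.card = q := card_filter_lt_fin l q hql.le
    have hA : ∑ a ∈ U₁, u ((a : ℕ) + 1) = ∑ i ∈ Finset.Icc 1 p, u i :=
      sum_prefix_eq m p hpm.le u
    have hWc : W₂ᶜ = (Finset.univ : Finset (Fin l)).filter (fun b : Fin l => ¬ (b : ℕ) < q) := by
      ext b; simp [hW₂def]
    have hC : ∑ b ∈ W₂ᶜ, w ((b : ℕ) + 1) = ∑ i ∈ Finset.Icc (q + 1) l, w i := by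
      rw [hWc]; exact sum_suffix_eq l q hql.le w
    have hsplit : ∀ a : Fin m, u ((a : ℕ) + 1)
        = ∑ b ∈ W₂, (if R a b then (1 : ℕ) else 0)
          + ∑ b ∈ W₂ᶜ, (if R a b then (1 : ℕ) else 0) := by
      intro a
      rw [← hdegU a, Finset.card_filter,
        ← Finset.sum_add_sum_compl W₂ (fun b => if R a b then (1 : ℕ) else 0)]
    have htot : ∑ a ∈ U₁, u ((a : ℕ) + 1)
        = (∑ a ∈ U₁, ∑ b ∈ W₂, (if R a b then (1 : ℕ) else 0))
          + ∑ b ∈ W₂ᶜ, ∑ a ∈ U₁, (if R a b then (1 : ℕ) else 0) := by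
      rw [Finset.sum_congr rfl fun a _ => hsplit a, Finset.sum_add_distrib]
      congr 1
      exact Finset.sum_comm
    have hAle : ∀ a ∈ U₁, ∑ b ∈ W₂, (if R a b then (1 : ℕ) else 0) ≤ q := by
      intro a _
      calc ∑ b ∈ W₂, (if R a b then (1 : ℕ) else 0)
          = (W₂.filter (fun b => R a b)).card := (Finset.card_filter _ _).symm
        _ ≤ W₂.card := Finset.card_le_card (Finset.filter_subset _ _)
        _ = q := hWcard
    have hBle : ∀ b ∈ W₂ᶜ, ∑ a ∈ U₁, (if R a b then (1 : ℕ) else 0) ≤ w ((b : ℕ) + 1) := by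
      intro b _
      rw [← hdegW b, Finset.card_filter]
      exact Finset.sum_le_sum_of_subset (Finset.subset_univ U₁)
    have hXle : ∑ a ∈ U₁, ∑ b ∈ W₂, (if R a b then (1 : ℕ) else 0) ≤ p * q := by
      calc ∑ a ∈ U₁, ∑ b ∈ W₂, (if R a b then (1 : ℕ) else 0)
          ≤ ∑ _a ∈ U₁, q := Finset.sum_le_sum hAle
        _ = p * q := by rw [Finset.sum_const, smul_eq_mul, hUcard]
    have hYle : ∑ b ∈ W₂ᶜ, ∑ a ∈ U₁, (if R a b then (1 : ℕ) else 0)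
        ≤ ∑ b ∈ W₂ᶜ, w ((b : ℕ) + 1) := Finset.sum_le_sum hBle
    have hXeq : ∑ a ∈ U₁, ∑ b ∈ W₂, (if R a b then (1 : ℕ) else 0) = p * q := by omega
    have hYeq : ∑ b ∈ W₂ᶜ, ∑ a ∈ U₁, (if R a b then (1 : ℕ) else 0)
        = ∑ b ∈ W₂ᶜ, w ((b : ℕ) + 1) := by omega
    have hXterm : ∀ a ∈ U₁, ∑ b ∈ W₂, (if R a b then (1 : ℕ) else 0) = q := by
      have hq' : ∑ _a ∈ U₁, q = p * q := by rw [Finset.sum_const, smul_eq_mul, hUcard]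
      exact (Finset.sum_eq_sum_iff_of_le hAle).mp (by rw [hXeq, hq'])
    have hYterm : ∀ b ∈ W₂ᶜ, ∑ a ∈ U₁, (if R a b then (1 : ℕ) else 0) = w ((b : ℕ) + 1) :=
      (Finset.sum_eq_sum_iff_of_le hBle).mp hYeq
    refine ⟨U₁, W₂, by omega, by omega, by omega, by omega, ?_, ?_⟩
    · intro a ha b hb
      have h1 : (W₂.filter (fun b => R a b)).card = W₂.card := by
        rw [Finset.card_filter, hXterm a ha, hWcard]
      have h2 : W₂.filter (fun b => R a b) = W₂ :=
        Finset.eq_of_subset_of_card_le (Finset.filter_subset _ _) (le_of_eq h1.symm)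
      have := h2 ▸ hb
      exact (Finset.mem_filter.mp this).2
    · intro a ha b hb
      have hb' : b ∈ W₂ᶜ := Finset.mem_compl.mpr hb
      have h1 : ∑ a ∈ U₁, (if R a b then (1 : ℕ) else 0)
          + ∑ a ∈ U₁ᶜ, (if R a b then (1 : ℕ) else 0)
          = ∑ a : Fin m, (if R a b then (1 : ℕ) else 0) :=
        Finset.sum_add_sum_compl U₁ _
      have h2 : ∑ a : Fin m, (if R a b then (1 : ℕ) else 0) = w ((b : ℕ) + 1) := by
        rw [← Finset.card_filter]; exact hdegW b
      have h3 : ∑ a ∈ U₁ᶜ, (if R a b then (1 : ℕ) else 0) = 0 := by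
        have := hYterm b hb'
        omega
      have h4 := (Finset.sum_eq_zero_iff).mp h3 a (Finset.mem_compl.mpr ha)
      intro hR
      rw [if_pos hR] at h4
      exact one_ne_zero h4
end
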